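/- arXiv:1911.03276 — 3 statements merged into one kernel-verified Lean document; each statement's English description precedes it below -/
import Mathlib

section
/- Under the LT-N diffusion model on any finite directed graph with admissible edge weights and autonomy factors, the expected positive influence function f^+ : 2^V → ℝ, defined by f^+(S) = E[|A^+(S)|], is monotone and submodular: f^+(S) ≤ f^+(T) whenever S ⊆ T ⊆ V, and f^+(S ∪ {v}) − f^+(S) ≥ f^+(T ∪ {v}) − f^+(T) for all S ⊆ T ⊆ V and v ∈ V \ T. -/
open MeasureTheory
open scoped Classical

/-- The uniform distribution on `[0,1]`. -/
noncomputable def unif : Measure ℝ := volume.restrict (Set.Icc (0 : ℝ) 1)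

/-- One step of the LT-N diffusion.  The state is the triple `(A, A⁺, A⁻)` of activated,
positive and negative nodes; `h2` is the state at step `τ − 2` and `h1` the state at step
`τ − 1`.  A node `v ∉ A_{τ−1}` is activated when `Σ_{u ∈ A_{τ−1}} w(u,v) ≥ b_v`, where `b_v`
is its uniform threshold; conditional on activation it turns positive with probability
`q⁺(v) + (1 − q⁺(v) − q⁻(v)) · Σ_{u ∈ A⁺_{τ−1}∖A_{τ−2}} w(u,v) / Σ_{u ∈ A_{τ−1}∖A_{τ−2}} w(u,v)`,
realized through an independent uniform `u_v`. -/
noncomputable def ltnStep {V : Type*} [Fintype V] [DecidableEq V]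
    (w : V → V → ℝ) (qp qm : V → ℝ) (b u : V → ℝ)
    (h2 h1 : Finset V × Finset V × Finset V) : Finset V × Finset V × Finset V :=
  let newly : Finset V := Finset.univ.filter fun v =>
    v ∉ h1.1 ∧ b v ≤ ∑ x ∈ h1.1, w x v
  let pPos : V → ℝ := fun v =>
    qp v + (1 - (qp v + qm v)) *
      ((∑ x ∈ h1.2.1 \ h2.1, w x v) / (∑ x ∈ h1.1 \ h2.1, w x v))
  (h1.1 ∪ newly,
    h1.2.1 ∪ newly.filter (fun v => u v < pPos v),
    h1.2.2 ∪ newly.filter (fun v => ¬ u v < pPos v))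

/-- The pair of consecutive states `((A_n, A⁺_n, A⁻_n), (A_{n+1}, A⁺_{n+1}, A⁻_{n+1}))` of
the LT-N diffusion started from seed set `S`, with `A_0 = ∅` and `A_1 = A⁺_1 = S`. -/
noncomputable def ltnHistAux {V : Type*} [Fintype V] [DecidableEq V]
    (w : V → V → ℝ) (qp qm : V → ℝ) (S : Finset V) (b u : V → ℝ) :
    ℕ → (Finset V × Finset V × Finset V) × (Finset V × Finset V × Finset V)
  | 0 => ((∅, ∅, ∅), (S, S, ∅))
  | n + 1 =>
    let p := ltnHistAux w qp qm S b u n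
    (p.2, ltnStep w qp qm b u p.1 p.2)

/-- The state `(A_n, A⁺_n, A⁻_n)` of the LT-N diffusion at step `n`. -/
noncomputable def ltnHist {V : Type*} [Fintype V] [DecidableEq V]
    (w : V → V → ℝ) (qp qm : V → ℝ) (S : Finset V) (b u : V → ℝ) (n : ℕ) :
    Finset V × Finset V × Finset V :=
  (ltnHistAux w qp qm S b u n).1

/-- The final set `A⁺(S)` of positively activated nodes of the LT-N diffusion (the process
stabilizes after at most `|V ∖ S|` steps, hence by step `|V| + 1`). -/
noncomputable def ltnPosSet {V : Type*} [Fintype V] [DecidableEq V]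
    (w : V → V → ℝ) (qp qm : V → ℝ) (S : Finset V) (b u : V → ℝ) : Finset V :=
  (ltnHist w qp qm S b u (Fintype.card V + 1)).2.1

/-- The expected positive influence `f⁺(S) = E[|A⁺(S)|]` of the LT-N model, the expectation
being over the i.i.d. uniform thresholds and the independent uniform sign variables. -/
noncomputable def ltnPosInfluence {V : Type*} [Fintype V] [DecidableEq V]
    (w : V → V → ℝ) (qp qm : V → ℝ) (S : Finset V) : ℝ :=
  ∫ ω : (V → ℝ) × (V → ℝ),
      ((ltnPosSet w qp qm S ω.1 ω.2).card : ℝ)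
    ∂((Measure.pi fun _ : V => unif).prod (Measure.pi fun _ : V => unif))

/-!
A run of the diffusion is summarised by its index: the activation time `τ v` of every node
(`horizon V + 1` for never) and its final sign `s v`. The event that the index equals `(τ, s)` is a
box: it confines each threshold `b v` to an interval (of length `∑_{τ x = τ v - 1} w x v` if `v`
is activated at a step `τ v ≥ 2`) and each sign variable `u v` to an interval whose length is the
conditional probability of the sign `s v`.
These lengths are also the probabilities that the independent local choices of a live-edge
configuration (a live in-edge from `x` with probability `w x v`, or none; the sign `+` with
probability `q⁺ v`, `-` with probability `q⁻ v`, or else a copy of the live in-neighbour's sign)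
are consistent with `(τ, s)` at `v`, and every configuration is consistent with exactly one index.
So `f⁺` is a convex combination of coverage functions `S ↦ #{v | S meets posReach cfg N v}`, which
are monotone and submodular.
-/

section Uniform

open Set

instance : IsProbabilityMeasure unif := by
  constructor
  rw [unif, Measure.restrict_apply MeasurableSet.univ, univ_inter, Real.volume_Icc]
  norm_num

lemma unif_apply {A : Set ℝ} (hA : MeasurableSet A) : unif A = volume (A ∩ Icc 0 1) :=
  Measure.restrict_apply hA

lemma unif_Iic {c : ℝ} (h1 : c ≤ 1) : unif (Iic c) = ENNReal.ofReal c := by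
  have : Iic c ∩ Icc 0 1 = Icc 0 c := by ext x; simp only [mem_inter_iff, mem_Iic, mem_Icc]; grind
  rw [unif_apply measurableSet_Iic, this, Real.volume_Icc, sub_zero]

lemma unif_Ioc {a c : ℝ} (h0 : 0 ≤ a) (h1 : c ≤ 1) :
    unif (Ioc a c) = ENNReal.ofReal (c - a) := by
  have : Ioc a c ∩ Icc 0 1 = Ioc a c := by ext x; simp only [mem_inter_iff, mem_Ioc, mem_Icc]; grind
  rw [unif_apply measurableSet_Ioc, this, Real.volume_Ioc]

lemma unif_Ioi {a : ℝ} (h0 : 0 ≤ a) : unif (Ioi a) = ENNReal.ofReal (1 - a) := by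
  have : Ioi a ∩ Icc 0 1 = Ioc a 1 := by
    ext x; simp only [mem_inter_iff, mem_Ioi, mem_Ioc, mem_Icc]; grind
  rw [unif_apply measurableSet_Ioi, this, Real.volume_Ioc]

lemma unif_Iio {p : ℝ} (h1 : p ≤ 1) : unif (Iio p) = ENNReal.ofReal p := by
  have : Iio p ∩ Icc 0 1 = Ico 0 p := by
    ext x; simp only [mem_inter_iff, mem_Iio, mem_Ico, mem_Icc]; grind
  rw [unif_apply measurableSet_Iio, this, Real.volume_Ico, sub_zero]

lemma unif_Ici {p : ℝ} (h0 : 0 ≤ p) : unif (Ici p) = ENNReal.ofReal (1 - p) := by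
  have : Ici p ∩ Icc 0 1 = Icc p 1 := by ext x; simp only [mem_inter_iff, mem_Ici, mem_Icc]; grind
  rw [unif_apply measurableSet_Ici, this, Real.volume_Icc]

end Uniform

lemma MeasureTheory.integral_comp_eq_sum_measureReal {Ω ι : Type*} [MeasurableSpace Ω]
    [Fintype ι] [MeasurableSpace ι] [MeasurableSingletonClass ι] (μ : Measure Ω)
    [IsFiniteMeasure μ] {f : Ω → ι} (hf : Measurable f) (g : ι → ℝ) :
    ∫ ω, g (f ω) ∂μ = ∑ i, μ.real (f ⁻¹' {i}) * g i := by
  rw [← integral_map hf.aemeasurable (measurable_of_finite g).aestronglyMeasurable,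
    integral_fintype Integrable.of_finite]
  simp [map_measureReal_apply hf (measurableSet_singleton _)]

namespace LTN

open Finset

section FirstTime

variable {V : Type*} (A : ℕ → Finset V) (N : ℕ)

noncomputable def firstTime (v : V) : ℕ :=
  if v ∈ A N then sInf {t | v ∈ A t} else N + 1

variable {A N}

lemma firstTime_le_succ (v : V) : firstTime A N v ≤ N + 1 := by
  unfold firstTime
  split_ifs with h
  · exact (Nat.sInf_le h).trans N.le_succ
  · exact le_rfl

lemma firstTime_of_notMem {v : V} (h : v ∉ A N) : firstTime A N v = N + 1 := if_neg h

lemma mem_iff_firstTime_le (hA : Monotone A) {t : ℕ} (ht : t ≤ N) (v : V) :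
    v ∈ A t ↔ firstTime A N v ≤ t := by
  constructor
  · intro hv
    rw [firstTime, if_pos (hA ht hv)]
    exact Nat.sInf_le hv
  · intro hle
    by_cases hN : v ∈ A N
    · rw [firstTime, if_pos hN] at hle
      exact hA hle (Nat.sInf_mem (s := {t | v ∈ A t}) ⟨N, hN⟩)
    · rw [firstTime_of_notMem hN] at hle
      omega

lemma one_le_firstTime (hA : Monotone A) (h0 : A 0 = ∅) (v : V) : 1 ≤ firstTime A N v := by
  by_contra! h
  have := (mem_iff_firstTime_le hA (Nat.zero_le N) v).mpr (by omega)
  simp [h0] at this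

lemma firstTime_eq_succ_iff (hA : Monotone A) {t : ℕ} (ht : t + 1 ≤ N) (v : V) :
    firstTime A N v = t + 1 ↔ v ∈ A (t + 1) ∧ v ∉ A t := by
  rw [mem_iff_firstTime_le hA ht, mem_iff_firstTime_le hA (by omega : t ≤ N)]
  omega

lemma firstTime_eq_one_iff (hA : Monotone A) (h0 : A 0 = ∅) (hN : 1 ≤ N) (v : V) :
    firstTime A N v = 1 ↔ v ∈ A 1 := by
  simp [firstTime_eq_succ_iff hA (t := 0) hN, h0]

lemma firstTime_eq_of_forall_mem_iff (hA : Monotone A) {τ : V → ℕ} (hτ : ∀ v, τ v ≤ N + 1)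
    (h : ∀ t ≤ N, ∀ v, v ∈ A t ↔ τ v ≤ t) : firstTime A N = τ := by
  funext v
  by_cases hτN : τ v ≤ N
  · have h₁ := (mem_iff_firstTime_le hA hτN v).mp ((h _ hτN v).mpr le_rfl)
    have h₂ := (h _ (h₁.trans hτN) v).mp ((mem_iff_firstTime_le hA (h₁.trans hτN) v).mpr le_rfl)
    omega
  · rw [firstTime_of_notMem fun hv => hτN ((h N le_rfl v).mp hv)]
    have := hτ v
    omega

end FirstTime

def horizon (V : Type*) [Fintype V] : ℕ := Fintype.card V + 1

lemma two_le_horizon (V : Type*) [Fintype V] [Nonempty V] : 2 ≤ horizon V := by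
  have := Fintype.card_pos (α := V)
  unfold horizon
  omega

section Diffusion

variable {V : Type*} [Fintype V] [DecidableEq V]
  (w : V → V → ℝ) (qp qm : V → ℝ) (S : Finset V) (b u : V → ℝ)

lemma ltnHist_zero : ltnHist w qp qm S b u 0 = (∅, ∅, ∅) := rfl

lemma ltnHist_one : ltnHist w qp qm S b u 1 = (S, S, ∅) := rfl

lemma ltnHist_add_two (t : ℕ) :
    ltnHist w qp qm S b u (t + 2) =
      ltnStep w qp qm b u (ltnHist w qp qm S b u t) (ltnHist w qp qm S b u (t + 1)) := rfl

lemma mem_ltnHist_add_two_fst (t : ℕ) (v : V) :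
    v ∈ (ltnHist w qp qm S b u (t + 2)).1 ↔ v ∈ (ltnHist w qp qm S b u (t + 1)).1 ∨
      b v ≤ ∑ x ∈ (ltnHist w qp qm S b u (t + 1)).1, w x v := by
  rw [ltnHist_add_two, ltnStep]
  by_cases hv : v ∈ (ltnHist w qp qm S b u (t + 1)).1 <;> simp [hv]

lemma monotone_ltnHist_fst : Monotone fun t => (ltnHist w qp qm S b u t).1 := by
  refine monotone_nat_of_le_succ fun t => ?_
  cases t with
  | zero => simp [ltnHist_zero]
  | succ t => exact fun v hv => (mem_ltnHist_add_two_fst w qp qm S b u t v).mpr (Or.inl hv)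

lemma ltnHist_pos_subset_fst (t : ℕ) :
    (ltnHist w qp qm S b u t).2.1 ⊆ (ltnHist w qp qm S b u t).1 := by
  induction t using Nat.strong_induction_on with
  | _ t ih =>
    match t with
    | 0 => simp [ltnHist_zero]
    | 1 => simp [ltnHist_one]
    | t + 2 =>
      rw [ltnHist_add_two, ltnStep]
      exact union_subset_union (ih (t + 1) (by omega)) (filter_subset _ _)

lemma mem_ltnHist_add_two_pos (t : ℕ) {v : V} (hv : v ∉ (ltnHist w qp qm S b u (t + 1)).1) :
    v ∈ (ltnHist w qp qm S b u (t + 2)).2.1 ↔ v ∈ (ltnHist w qp qm S b u (t + 2)).1 ∧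
      u v < qp v + (1 - (qp v + qm v)) *
        ((∑ x ∈ (ltnHist w qp qm S b u (t + 1)).2.1 \ (ltnHist w qp qm S b u t).1, w x v) /
         (∑ x ∈ (ltnHist w qp qm S b u (t + 1)).1 \ (ltnHist w qp qm S b u t).1, w x v)) := by
  have hv' : v ∉ (ltnHist w qp qm S b u (t + 1)).2.1 :=
    fun h => hv (ltnHist_pos_subset_fst w qp qm S b u _ h)
  rw [ltnHist_add_two, ltnStep]
  simp [hv, hv']

lemma ltnHist_fst_inter_pos_succ (t : ℕ) :
    (ltnHist w qp qm S b u t).1 ∩ (ltnHist w qp qm S b u (t + 1)).2.1 =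
      (ltnHist w qp qm S b u t).2.1 := by
  cases t with
  | zero => simp [ltnHist_zero]
  | succ t =>
    ext v
    by_cases hv : v ∈ (ltnHist w qp qm S b u (t + 1)).1
    · rw [ltnHist_add_two, ltnStep]
      simp [hv]
    · simp only [mem_inter, hv, false_and, false_iff]
      exact fun h => hv (ltnHist_pos_subset_fst w qp qm S b u _ h)

lemma mem_ltnHist_pos_succ_iff_of_mem {t : ℕ} {v : V} (hv : v ∈ (ltnHist w qp qm S b u t).1) :
    v ∈ (ltnHist w qp qm S b u (t + 1)).2.1 ↔ v ∈ (ltnHist w qp qm S b u t).2.1 := by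
  have := congrArg (v ∈ ·) (ltnHist_fst_inter_pos_succ w qp qm S b u t)
  simpa [hv] using this

lemma ltnHist_fst_inter_pos {t T : ℕ} (h : t ≤ T) :
    (ltnHist w qp qm S b u t).1 ∩ (ltnHist w qp qm S b u T).2.1 =
      (ltnHist w qp qm S b u t).2.1 := by
  induction T, h using Nat.le_induction with
  | base => exact inter_eq_right.mpr (ltnHist_pos_subset_fst w qp qm S b u t)
  | succ T hT ih =>
    rw [← ih, ← ltnHist_fst_inter_pos_succ w qp qm S b u T, ← inter_assoc,
      inter_eq_left.mpr (monotone_ltnHist_fst w qp qm S b u hT)]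

end Diffusion

section Timing

variable {V : Type*} [Fintype V] (w : V → V → ℝ) (qp qm : V → ℝ) (S : Finset V)

noncomputable def activeBy (τ : V → ℕ) (t : ℕ) : Finset V := univ.filter fun x => τ x ≤ t

noncomputable def posBy (τ : V → ℕ) (s : V → Bool) (t : ℕ) : Finset V :=
  univ.filter fun x => τ x ≤ t ∧ s x = true

noncomputable def inWeight (τ : V → ℕ) (t : ℕ) (v : V) : ℝ := ∑ x ∈ activeBy τ t, w x v

/-- The paper's `q⁺(v) + (1 - r(v)) · w(A⁺_t \ A_{t-1}, v) / w(A_t \ A_{t-1}, v)`, where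
`A_t \ A_{t-1} = {x | τ x = t}`. -/
noncomputable def posProb (τ : V → ℕ) (s : V → Bool) (t : ℕ) (v : V) : ℝ :=
  qp v + (1 - (qp v + qm v)) *
    ((∑ x with τ x = t ∧ s x = true, w x v) / (∑ x with τ x = t, w x v))

/-- The values of the threshold `b v` for which `v` is activated at time `τ v`, given that
every other node `x` is activated at time `τ x` (where `horizon V + 1` means never). -/
noncomputable def thresholdSet (τ : V → ℕ) (s : V → Bool) (v : V) : Set ℝ :=
  if v ∈ S then (if τ v = 1 ∧ s v = true then Set.univ else ∅)
  else if 2 ≤ τ v ∧ τ v ≤ horizon V then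
    (if τ v = 2 then Set.Iic (inWeight w τ 1 v)
      else Set.Ioc (inWeight w τ (τ v - 2) v) (inWeight w τ (τ v - 1) v))
  else if τ v = horizon V + 1 then Set.Ioi (inWeight w τ (horizon V - 1) v)
  else ∅

noncomputable def signSet (τ : V → ℕ) (s : V → Bool) (v : V) : Set ℝ :=
  if v ∈ S then Set.univ
  else if 2 ≤ τ v ∧ τ v ≤ horizon V then
    (if s v = true then Set.Iio (posProb w qp qm τ s (τ v - 1) v)
      else Set.Ici (posProb w qp qm τ s (τ v - 1) v))
  else if τ v = horizon V + 1 then (if s v = true then ∅ else Set.univ)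
  else Set.univ

variable {w qp qm}

lemma activeBy_mono (τ : V → ℕ) : Monotone (activeBy τ) :=
  fun _ _ h _ hx => by simp only [activeBy, mem_filter, mem_univ, true_and] at hx ⊢; omega

lemma inWeight_mono (hw : ∀ x v, 0 ≤ w x v) (τ : V → ℕ) (v : V) :
    Monotone fun t => inWeight w τ t v :=
  fun _ _ h => sum_le_sum_of_subset_of_nonneg (activeBy_mono τ h) fun x _ _ => hw x v

lemma inWeight_nonneg (hw : ∀ x v, 0 ≤ w x v) (τ : V → ℕ) (t : ℕ) (v : V) :
    0 ≤ inWeight w τ t v :=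
  sum_nonneg fun x _ => hw x v

lemma inWeight_le_one (hw : ∀ x v, 0 ≤ w x v) (hw1 : ∀ v, ∑ x, w x v ≤ 1)
    (τ : V → ℕ) (t : ℕ) (v : V) : inWeight w τ t v ≤ 1 :=
  (sum_le_sum_of_subset_of_nonneg (subset_univ _) fun x _ _ => hw x v).trans (hw1 v)

lemma activeBy_sdiff [DecidableEq V] (τ : V → ℕ) (t : ℕ) :
    activeBy τ (t + 1) \ activeBy τ t = univ.filter fun x => τ x = t + 1 := by
  ext x
  simp only [activeBy, mem_sdiff, mem_filter, mem_univ, true_and]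
  omega

lemma posBy_sdiff [DecidableEq V] (τ : V → ℕ) (s : V → Bool) (t : ℕ) :
    posBy τ s (t + 1) \ activeBy τ t = univ.filter fun x => τ x = t + 1 ∧ s x = true := by
  ext x
  simp only [posBy, activeBy, mem_sdiff, mem_filter, mem_univ, true_and]
  cases s x <;> simp only [Bool.false_eq_true, and_false, false_and, and_true]; omega

lemma posProb_mem_Icc (hw : ∀ x v, 0 ≤ w x v) (hqp : ∀ v, 0 ≤ qp v) (hqm : ∀ v, 0 ≤ qm v)
    (hr : ∀ v, qp v + qm v ≤ 1) (τ : V → ℕ) (s : V → Bool) (t : ℕ) (v : V) :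
    posProb w qp qm τ s t v ∈ Set.Icc 0 1 := by
  have hfrac : (∑ x with τ x = t ∧ s x = true, w x v) / (∑ x with τ x = t, w x v) ∈
      Set.Icc (0 : ℝ) 1 := by
    have hle : ∑ x with τ x = t ∧ s x = true, w x v ≤ ∑ x with τ x = t, w x v :=
      sum_le_sum_of_subset_of_nonneg (fun x hx => by simp_all) fun x _ _ => hw x v
    exact ⟨div_nonneg (sum_nonneg fun x _ => hw x v) (sum_nonneg fun x _ => hw x v),
      div_le_one_of_le₀ hle (sum_nonneg fun x _ => hw x v)⟩
  have h1r : 0 ≤ 1 - (qp v + qm v) := by linarith [hr v]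
  unfold posProb
  constructor
  · nlinarith [hqp v, hfrac.1]
  · nlinarith [hqm v, hfrac.2]

end Timing

section Intervals

variable {V : Type*} [Fintype V] {w : V → V → ℝ} {qp qm : V → ℝ} {S : Finset V}
  {τ : V → ℕ} {s : V → Bool} {v : V}

lemma mem_thresholdSet_of_mem {x : ℝ} (hv : v ∈ S) :
    x ∈ thresholdSet w S τ s v ↔ τ v = 1 ∧ s v = true := by
  unfold thresholdSet
  split_ifs with h <;> simp [h]

lemma mem_thresholdSet_of_notMem {x : ℝ} (hv : v ∉ S) (hx : x ∈ thresholdSet w S τ s v) :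
    2 ≤ τ v ∧ τ v ≤ horizon V + 1 := by
  unfold thresholdSet at hx
  split_ifs at hx with h₁ h₂ <;> simp_all [horizon]
  omega

lemma mem_thresholdSet_iff (hw : ∀ x v, 0 ≤ w x v) {x : ℝ} (hv : v ∉ S) (h₂ : 2 ≤ τ v)
    (hN : τ v ≤ horizon V + 1) :
    x ∈ thresholdSet w S τ s v ↔ ∀ k, k + 2 ≤ horizon V → k + 1 < τ v →
      (x ≤ inWeight w τ (k + 1) v ↔ τ v ≤ k + 2) := by
  have : Nonempty V := ⟨v⟩
  have hmono := inWeight_mono hw τ v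
  have hNle := two_le_horizon V
  unfold thresholdSet
  rw [if_neg hv]
  by_cases hact : τ v ≤ horizon V
  · rw [if_pos ⟨h₂, hact⟩]
    by_cases h2 : τ v = 2
    · rw [if_pos h2, Set.mem_Iic]
      refine ⟨fun hx k _ hk => ⟨fun _ => by omega, fun _ => ?_⟩, fun h => ?_⟩
      · rwa [show k = 0 by omega]
      · exact (h 0 hNle (by omega)).mpr h2.le
    · rw [if_neg h2, Set.mem_Ioc]
      refine ⟨fun ⟨hlo, hhi⟩ k _ hk => ⟨fun hx => ?_, fun hle => ?_⟩, fun h => ⟨?_, ?_⟩⟩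
      · by_contra hlt
        linarith [hmono (show k + 1 ≤ τ v - 2 by omega)]
      · rwa [show k + 1 = τ v - 1 by omega]
      · have := (h (τ v - 3) (by omega) (by omega)).not.mpr (by omega)
        rw [show τ v - 3 + 1 = τ v - 2 by omega] at this
        exact not_le.mp this
      · have := (h (τ v - 2) (by omega) (by omega)).mpr (by omega)
        rwa [show τ v - 2 + 1 = τ v - 1 by omega] at this
  · rw [if_neg (by omega), if_pos (by omega), Set.mem_Ioi]
    refine ⟨fun hx k hk _ => ⟨fun hle => ?_, fun hle => by omega⟩, fun h => ?_⟩
    · linarith [hmono (show k + 1 ≤ horizon V - 1 by omega)]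
    · have := (h (horizon V - 2) (by omega) (by omega)).not.mpr (by omega)
      rw [show horizon V - 2 + 1 = horizon V - 1 by omega] at this
      exact not_le.mp this

lemma mem_signSet_of_active {y : ℝ} (hv : v ∉ S) (h₂ : 2 ≤ τ v) (hN : τ v ≤ horizon V) :
    y ∈ signSet w qp qm S τ s v ↔ (s v = true ↔ y < posProb w qp qm τ s (τ v - 1) v) := by
  unfold signSet
  rw [if_neg hv, if_pos ⟨h₂, hN⟩]
  cases s v <;> simp

lemma mem_signSet_of_inactive {y : ℝ} (hv : v ∉ S) (hN : τ v = horizon V + 1) :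
    y ∈ signSet w qp qm S τ s v ↔ s v = false := by
  unfold signSet
  rw [if_neg hv, if_neg (by omega), if_pos hN]
  cases s v <;> simp

variable (w qp qm S) in
def InBox (τ : V → ℕ) (s : V → Bool) (b u : V → ℝ) : Prop :=
  ∀ v, b v ∈ thresholdSet w S τ s v ∧ u v ∈ signSet w qp qm S τ s v

variable {b u : V → ℝ}

lemma InBox.seed (h : InBox w qp qm S τ s b u) (hv : v ∈ S) : τ v = 1 ∧ s v = true :=
  (mem_thresholdSet_of_mem hv).mp (h v).1

lemma InBox.nonseed (h : InBox w qp qm S τ s b u) (hv : v ∉ S) :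
    2 ≤ τ v ∧ τ v ≤ horizon V + 1 :=
  mem_thresholdSet_of_notMem hv (h v).1

lemma InBox.eq_one_iff (h : InBox w qp qm S τ s b u) : τ v = 1 ↔ v ∈ S := by
  by_cases hv : v ∈ S
  · simp [hv, (h.seed hv).1]
  · simp only [hv, iff_false]
    have := h.nonseed hv
    omega

lemma InBox.one_le (h : InBox w qp qm S τ s b u) (v : V) : 1 ≤ τ v := by
  by_cases hv : v ∈ S
  · exact (h.seed hv).1.ge
  · exact le_trans (by norm_num) (h.nonseed hv).1

lemma InBox.le_horizon_succ (h : InBox w qp qm S τ s b u) (v : V) : τ v ≤ horizon V + 1 := by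
  by_cases hv : v ∈ S
  · rw [(h.seed hv).1]; unfold horizon; omega
  · exact (h.nonseed hv).2

variable (w qp qm S)

lemma measurableSet_thresholdSet (τ : V → ℕ) (s : V → Bool) (v : V) :
    MeasurableSet (thresholdSet w S τ s v) := by
  unfold thresholdSet
  split_ifs <;> measurability

lemma measurableSet_signSet (τ : V → ℕ) (s : V → Bool) (v : V) :
    MeasurableSet (signSet w qp qm S τ s v) := by
  unfold signSet
  split_ifs <;> measurability

end Intervals

section Fibre

variable {V : Type*} [Fintype V] [DecidableEq V]
  (w : V → V → ℝ) (qp qm : V → ℝ) (S : Finset V) (b u : V → ℝ)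

noncomputable def actTime : V → ℕ :=
  firstTime (fun t => (ltnHist w qp qm S b u t).1) (horizon V)

noncomputable def finalSign (v : V) : Bool :=
  decide (v ∈ (ltnHist w qp qm S b u (horizon V)).2.1)

variable {w qp qm S b u}

lemma ltnHist_step_of_eq {τ : V → ℕ} {s : V → Bool} {t : ℕ}
    (h₀ : (ltnHist w qp qm S b u t).1 = activeBy τ t)
    (h₁ : (ltnHist w qp qm S b u (t + 1)).1 = activeBy τ (t + 1))
    (hP : (ltnHist w qp qm S b u (t + 1)).2.1 = posBy τ s (t + 1)) (v : V) :
    (v ∈ (ltnHist w qp qm S b u (t + 2)).1 ↔ τ v ≤ t + 1 ∨ b v ≤ inWeight w τ (t + 1) v) ∧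
    (t + 1 < τ v → (v ∈ (ltnHist w qp qm S b u (t + 2)).2.1 ↔
      v ∈ (ltnHist w qp qm S b u (t + 2)).1 ∧ u v < posProb w qp qm τ s (t + 1) v)) := by
  constructor
  · rw [mem_ltnHist_add_two_fst, h₁]
    simp [activeBy, inWeight]
  · intro hv
    rw [mem_ltnHist_add_two_pos _ _ _ _ _ _ t (by simp [h₁, activeBy]; omega), hP, h₀, h₁,
      posBy_sdiff, activeBy_sdiff]
    rfl

lemma ltnHist_add_two_eq_of_inBox (hw : ∀ x v, 0 ≤ w x v) {τ : V → ℕ} {s : V → Bool}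
    (h : InBox w qp qm S τ s b u) {t : ℕ} (ht : t + 2 ≤ horizon V)
    (h₀ : (ltnHist w qp qm S b u t).1 = activeBy τ t)
    (h₁ : (ltnHist w qp qm S b u (t + 1)).1 = activeBy τ (t + 1))
    (hP : (ltnHist w qp qm S b u (t + 1)).2.1 = posBy τ s (t + 1)) :
    (ltnHist w qp qm S b u (t + 2)).1 = activeBy τ (t + 2) ∧
      (ltnHist w qp qm S b u (t + 2)).2.1 = posBy τ s (t + 2) := by
  have hstep := ltnHist_step_of_eq h₀ h₁ hP
  have hA : (ltnHist w qp qm S b u (t + 2)).1 = activeBy τ (t + 2) := by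
    ext v
    rw [(hstep v).1]
    simp only [activeBy, mem_filter, mem_univ, true_and]
    by_cases hvt : τ v ≤ t + 1
    · simp only [hvt, true_or, true_iff]; omega
    · have hv : v ∉ S := fun hv => hvt ((h.seed hv).1 ▸ by omega)
      rw [(mem_thresholdSet_iff hw hv (h.nonseed hv).1 (h.nonseed hv).2).mp (h v).1 t ht
        (by omega)]
      omega
  refine ⟨hA, ?_⟩
  ext v
  rw [posBy, mem_filter]
  by_cases hvt : τ v ≤ t + 1
  · rw [mem_ltnHist_pos_succ_iff_of_mem w qp qm S b u (by simp [h₁, activeBy, hvt]), hP,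
      posBy, mem_filter]
    simp only [mem_univ, hvt, show τ v ≤ t + 2 by omega, true_and]
  · rw [(hstep v).2 (by omega), hA, activeBy, mem_filter]
    by_cases hvt₂ : τ v = t + 2
    · have hv : v ∉ S := fun hv => by have := (h.seed hv).1; omega
      have hs := (mem_signSet_of_active hv (by omega) (by omega)).mp (h v).2
      rw [hvt₂, show t + 2 - 1 = t + 1 by omega] at hs
      simp [hvt₂, hs]
    · simp only [show ¬ τ v ≤ t + 2 by omega, false_and, and_false]

lemma ltnHist_eq_of_inBox (hw : ∀ x v, 0 ≤ w x v) {τ : V → ℕ} {s : V → Bool}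
    (h : InBox w qp qm S τ s b u) : ∀ t ≤ horizon V,
    (ltnHist w qp qm S b u t).1 = activeBy τ t ∧ (ltnHist w qp qm S b u t).2.1 = posBy τ s t := by
  intro t
  induction t using Nat.strong_induction_on with
  | _ t ih =>
    match t with
    | 0 =>
      intro _
      refine ⟨?_, ?_⟩ <;> ext v <;> simp [ltnHist_zero, activeBy, posBy] <;> have := h.one_le v <;>
        omega
    | 1 =>
      intro _
      refine ⟨?_, ?_⟩ <;> ext v
      · simp only [ltnHist_one, activeBy, mem_filter, mem_univ, true_and]
        have := h.one_le v
        rw [← h.eq_one_iff]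
        omega
      · simp only [ltnHist_one, posBy, mem_filter, mem_univ, true_and]
        have := h.one_le v
        exact ⟨fun hv => ⟨(h.seed hv).1.le, (h.seed hv).2⟩,
          fun ⟨h₁, _⟩ => h.eq_one_iff.mp (by omega)⟩
    | t + 2 =>
      intro ht
      obtain ⟨hA₀, -⟩ := ih t (by omega) (by omega)
      obtain ⟨hA₁, hP₁⟩ := ih (t + 1) (by omega) (by omega)
      exact ltnHist_add_two_eq_of_inBox hw h ht hA₀ hA₁ hP₁

variable (w qp qm S b u) in
lemma ltnHist_fst_eq_activeBy {t : ℕ} (ht : t ≤ horizon V) :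
    (ltnHist w qp qm S b u t).1 = activeBy (actTime w qp qm S b u) t := by
  ext v
  rw [mem_iff_firstTime_le (monotone_ltnHist_fst w qp qm S b u) ht, activeBy, mem_filter]
  simp [actTime]

variable (w qp qm S b u) in
lemma ltnHist_pos_eq_posBy {t : ℕ} (ht : t ≤ horizon V) :
    (ltnHist w qp qm S b u t).2.1 = posBy (actTime w qp qm S b u) (finalSign w qp qm S b u) t := by
  ext v
  rw [← ltnHist_fst_inter_pos w qp qm S b u ht, mem_inter, ltnHist_fst_eq_activeBy w qp qm S b u ht]
  simp [activeBy, posBy, finalSign]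

variable (w qp qm S b u) in
lemma actTime_eq_one_iff (v : V) : actTime w qp qm S b u v = 1 ↔ v ∈ S :=
  firstTime_eq_one_iff (monotone_ltnHist_fst w qp qm S b u) rfl (by unfold horizon; omega) v

variable (w qp qm b u) in
lemma finalSign_of_mem {v : V} (hv : v ∈ S) : finalSign w qp qm S b u v = true := by
  have := congrArg (v ∈ ·) (ltnHist_fst_inter_pos w qp qm S b u (t := 1) (T := horizon V)
    (by unfold horizon; omega))
  simp only [ltnHist_one, mem_inter, hv, true_and, eq_iff_iff, iff_true] at this
  exact decide_eq_true this

lemma inBox_actTime_finalSign (hw : ∀ x v, 0 ≤ w x v) :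
    InBox w qp qm S (actTime w qp qm S b u) (finalSign w qp qm S b u) b u := by
  intro v
  have hstep : ∀ k, k + 2 ≤ horizon V → _ := fun k hk =>
    ltnHist_step_of_eq (ltnHist_fst_eq_activeBy w qp qm S b u (t := k) (by omega))
      (ltnHist_fst_eq_activeBy w qp qm S b u (t := k + 1) (by omega))
      (ltnHist_pos_eq_posBy w qp qm S b u (t := k + 1) (by omega)) v
  have hτ₁ := actTime_eq_one_iff w qp qm S b u v
  have hτ₀ : 1 ≤ actTime w qp qm S b u v :=
    one_le_firstTime (monotone_ltnHist_fst w qp qm S b u) rfl v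
  have hτN : actTime w qp qm S b u v ≤ horizon V + 1 := firstTime_le_succ v
  set τ := actTime w qp qm S b u
  set s := finalSign w qp qm S b u
  by_cases hv : v ∈ S
  · exact ⟨(mem_thresholdSet_of_mem hv).mpr ⟨hτ₁.mpr hv, finalSign_of_mem w qp qm b u hv⟩,
      by simp [signSet, hv]⟩
  have h₂ : 2 ≤ τ v := by have := hτ₁.not.mpr hv; omega
  refine ⟨(mem_thresholdSet_iff hw hv h₂ hτN).mpr fun k hk hkv => ?_, ?_⟩
  · have := (hstep k hk).1
    rw [ltnHist_fst_eq_activeBy w qp qm S b u hk] at this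
    simp only [activeBy, mem_filter, mem_univ, true_and, show ¬τ v ≤ k + 1 by omega,
      false_or] at this
    exact this.symm
  by_cases hact : τ v ≤ horizon V
  · rw [mem_signSet_of_active hv h₂ hact]
    obtain ⟨k, hk⟩ : ∃ k, τ v = k + 2 := ⟨τ v - 2, by omega⟩
    have := (hstep k (by omega)).2 (by omega)
    rw [ltnHist_pos_eq_posBy w qp qm S b u (by omega),
      ltnHist_fst_eq_activeBy w qp qm S b u (by omega)] at this
    have hk' : actTime w qp qm S b u v = k + 2 := hk
    simp only [activeBy, posBy, mem_filter, mem_univ, true_and, hk', le_refl] at this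
    rw [hk, show k + 2 - 1 = k + 1 by omega]
    exact this
  · rw [mem_signSet_of_inactive hv (by omega)]
    have hvA : v ∉ (ltnHist w qp qm S b u (horizon V)).1 :=
      (mem_iff_firstTime_le (monotone_ltnHist_fst w qp qm S b u) le_rfl v).not.mpr hact
    exact decide_eq_false fun h => hvA (ltnHist_pos_subset_fst w qp qm S b u _ h)

lemma actTime_eq_and_finalSign_eq_iff (hw : ∀ x v, 0 ≤ w x v) {τ : V → ℕ} {s : V → Bool} :
    actTime w qp qm S b u = τ ∧ finalSign w qp qm S b u = s ↔ InBox w qp qm S τ s b u := by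
  refine ⟨by rintro ⟨rfl, rfl⟩; exact inBox_actTime_finalSign hw, fun h => ?_⟩
  have hrec := ltnHist_eq_of_inBox hw h
  have hτ : actTime w qp qm S b u = τ :=
    firstTime_eq_of_forall_mem_iff (monotone_ltnHist_fst w qp qm S b u) h.le_horizon_succ
      fun t ht v => by rw [(hrec t ht).1, activeBy, mem_filter]; simp
  refine ⟨hτ, funext fun v => ?_⟩
  rw [finalSign, (hrec _ le_rfl).2]
  simp only [posBy, mem_filter, mem_univ, true_and]
  by_cases hvN : τ v ≤ horizon V
  · simp [hvN]
  · have hv : v ∉ S := fun hv => hvN (by rw [(h.seed hv).1]; unfold horizon; omega)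
    have := (mem_signSet_of_inactive hv (by have := h.le_horizon_succ v; omega)).mp (h v).2
    simp [hvN, this]

end Fibre

section BoxMeasure

variable {V : Type*} [Fintype V] (w : V → V → ℝ) (qp qm : V → ℝ) (S : Finset V)

noncomputable def thresholdProb (τ : V → ℕ) (s : V → Bool) (v : V) : ℝ :=
  if v ∈ S then (if τ v = 1 ∧ s v = true then 1 else 0)
  else if 2 ≤ τ v ∧ τ v ≤ horizon V then
    (if τ v = 2 then inWeight w τ 1 v else inWeight w τ (τ v - 1) v - inWeight w τ (τ v - 2) v)
  else if τ v = horizon V + 1 then 1 - inWeight w τ (horizon V - 1) v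
  else 0

noncomputable def signProb (τ : V → ℕ) (s : V → Bool) (v : V) : ℝ :=
  if v ∈ S then 1
  else if 2 ≤ τ v ∧ τ v ≤ horizon V then
    (if s v = true then posProb w qp qm τ s (τ v - 1) v else 1 - posProb w qp qm τ s (τ v - 1) v)
  else if τ v = horizon V + 1 then (if s v = true then 0 else 1)
  else 1

variable {w qp qm}

lemma unif_thresholdSet (hw : ∀ x v, 0 ≤ w x v) (hw1 : ∀ v, ∑ x, w x v ≤ 1)
    (τ : V → ℕ) (s : V → Bool) (v : V) :
    unif (thresholdSet w S τ s v) = ENNReal.ofReal (thresholdProb w S τ s v) := by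
  unfold thresholdSet thresholdProb
  split_ifs
  · simp
  · simp
  · exact unif_Iic (inWeight_le_one hw hw1 τ 1 v)
  · exact unif_Ioc (inWeight_nonneg hw τ _ v) (inWeight_le_one hw hw1 τ _ v)
  · exact unif_Ioi (inWeight_nonneg hw τ _ v)
  · simp

lemma unif_signSet (hw : ∀ x v, 0 ≤ w x v) (hqp : ∀ v, 0 ≤ qp v) (hqm : ∀ v, 0 ≤ qm v)
    (hr : ∀ v, qp v + qm v ≤ 1) (τ : V → ℕ) (s : V → Bool) (v : V) :
    unif (signSet w qp qm S τ s v) = ENNReal.ofReal (signProb w qp qm S τ s v) := by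
  obtain ⟨hp0, hp1⟩ := posProb_mem_Icc hw hqp hqm hr τ s (τ v - 1) v
  unfold signSet signProb
  split_ifs
  · simp
  · exact unif_Iio hp1
  · exact unif_Ici hp0
  · simp
  · simp
  · simp

lemma thresholdProb_nonneg (hw : ∀ x v, 0 ≤ w x v) (hw1 : ∀ v, ∑ x, w x v ≤ 1)
    (τ : V → ℕ) (s : V → Bool) (v : V) : 0 ≤ thresholdProb w S τ s v := by
  unfold thresholdProb
  have := inWeight_mono hw τ v (show τ v - 2 ≤ τ v - 1 by omega)
  have := inWeight_nonneg hw τ 1 v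
  have := inWeight_le_one hw hw1 τ (horizon V - 1) v
  split_ifs <;> linarith

lemma signProb_nonneg (hw : ∀ x v, 0 ≤ w x v) (hqp : ∀ v, 0 ≤ qp v) (hqm : ∀ v, 0 ≤ qm v)
    (hr : ∀ v, qp v + qm v ≤ 1) (τ : V → ℕ) (s : V → Bool) (v : V) :
    0 ≤ signProb w qp qm S τ s v := by
  obtain ⟨hp0, hp1⟩ := posProb_mem_Icc hw hqp hqm hr τ s (τ v - 1) v
  unfold signProb
  split_ifs <;> linarith

end BoxMeasure

/-- Activation times (with `horizon V + 1` for never) and final signs of all nodes. -/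
abbrev Index (V : Type*) [Fintype V] : Type _ := (V → Fin (horizon V + 2)) × (V → Bool)

def Index.time {V : Type*} [Fintype V] (i : Index V) (v : V) : ℕ := i.1 v

section Integral

variable {V : Type*} [Fintype V] [DecidableEq V] (w : V → V → ℝ) (qp qm : V → ℝ) (S : Finset V)

noncomputable def index (b u : V → ℝ) : Index V :=
  (fun v => ⟨actTime w qp qm S b u v, Nat.lt_succ_of_le (firstTime_le_succ v)⟩,
    finalSign w qp qm S b u)

variable {w qp qm}

lemma preimage_index_singleton (hw : ∀ x v, 0 ≤ w x v) (i : Index V) :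
    (fun ω : (V → ℝ) × (V → ℝ) => index w qp qm S ω.1 ω.2) ⁻¹' {i} =
      (Set.univ.pi fun v => thresholdSet w S i.time i.2 v) ×ˢ
        (Set.univ.pi fun v => signSet w qp qm S i.time i.2 v) := by
  ext ω
  have : index w qp qm S ω.1 ω.2 = i ↔
      actTime w qp qm S ω.1 ω.2 = i.time ∧ finalSign w qp qm S ω.1 ω.2 = i.2 := by
    simp only [index, Prod.ext_iff, funext_iff, Fin.ext_iff, Index.time]
  rw [Set.mem_preimage, Set.mem_singleton_iff, this, actTime_eq_and_finalSign_eq_iff hw,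
    Set.mem_prod, Set.mem_univ_pi, Set.mem_univ_pi, InBox, forall_and]

lemma ltnPosInfluence_eq_sum_index (hw : ∀ x v, 0 ≤ w x v) (hw1 : ∀ v, ∑ x, w x v ≤ 1)
    (hqp : ∀ v, 0 ≤ qp v) (hqm : ∀ v, 0 ≤ qm v) (hr : ∀ v, qp v + qm v ≤ 1) :
    ltnPosInfluence w qp qm S = ∑ i : Index V,
      (∏ v, thresholdProb w S i.time i.2 v * signProb w qp qm S i.time i.2 v) *
        (#{v | i.2 v = true} : ℝ) := by
  have hmeas : Measurable fun ω : (V → ℝ) × (V → ℝ) => index w qp qm S ω.1 ω.2 :=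
    measurable_to_countable' fun i => by
      rw [preimage_index_singleton S hw]
      exact (MeasurableSet.univ_pi fun v => (measurableSet_thresholdSet w S _ _ v)).prod
        (MeasurableSet.univ_pi fun v => measurableSet_signSet w qp qm S _ _ v)
  have hcard : ∀ b u : V → ℝ,
      (ltnPosSet w qp qm S b u).card = #{v | (index w qp qm S b u).2 v = true} := by
    intro b u
    congr 1
    ext v
    rw [mem_filter]
    simp only [index, finalSign, ltnPosSet, horizon, mem_univ, true_and]
    exact decide_eq_true_iff.symm
  simp only [ltnPosInfluence, hcard]
  rw [integral_comp_eq_sum_measureReal _ hmeas (fun i => (#{v | i.2 v = true} : ℝ))]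
  refine sum_congr rfl fun i _ => ?_
  rw [preimage_index_singleton S hw, measureReal_def, Measure.prod_prod, Measure.pi_pi, Measure.pi_pi,
    ENNReal.toReal_mul, ENNReal.toReal_prod, ENNReal.toReal_prod, ← prod_mul_distrib]
  congr 1
  refine prod_congr rfl fun v _ => ?_
  rw [unif_thresholdSet S hw hw1, unif_signSet S hw hqp hqm hr,
    ENNReal.toReal_ofReal (thresholdProb_nonneg S hw hw1 _ _ v),
    ENNReal.toReal_ofReal (signProb_nonneg S hw hqp hqm hr _ _ v)]

end Integral

section Coverage

variable {ι α : Type*} [Fintype ι] [DecidableEq α] (R : ι → Finset α)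

def coverage (S : Finset α) : ℕ := #{x | (S ∩ R x).Nonempty}

lemma coverage_mono {S T : Finset α} (h : S ⊆ T) : coverage R S ≤ coverage R T :=
  card_le_card fun x hx => by
    simp only [mem_filter, mem_univ, true_and] at hx ⊢
    exact hx.mono (inter_subset_inter_right h)

lemma coverage_insert (S : Finset α) (v : α) :
    coverage R (insert v S) = coverage R S + #{x | v ∈ R x ∧ ¬(S ∩ R x).Nonempty} := by
  rw [coverage, coverage, ← card_union_of_disjoint (disjoint_filter.mpr fun _ _ h h' => h'.2 h)]
  congr 1
  ext x
  simp only [mem_filter, mem_univ, true_and, mem_union]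
  by_cases hv : v ∈ R x
  · simp [insert_inter_of_mem hv, hv, or_iff_not_imp_left, nonempty_iff_ne_empty]
  · simp [insert_inter_of_notMem hv, hv]

lemma coverage_insert_add_le {S T : Finset α} (h : S ⊆ T) (v : α) :
    coverage R (insert v T) + coverage R S ≤ coverage R (insert v S) + coverage R T := by
  rw [coverage_insert, coverage_insert]
  have : #{x | v ∈ R x ∧ ¬(T ∩ R x).Nonempty} ≤ #{x | v ∈ R x ∧ ¬(S ∩ R x).Nonempty} :=
    card_le_card fun x hx => by
      simp only [mem_filter, mem_univ, true_and] at hx ⊢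
      exact ⟨hx.1, fun h' => hx.2 (h'.mono (inter_subset_inter_right h))⟩
  omega

end Coverage

lemma inter_insert_nonempty_iff {α : Type*} [DecidableEq α] {S R : Finset α} {v : α} :
    (S ∩ insert v R).Nonempty ↔ v ∈ S ∨ (S ∩ R).Nonempty := by
  by_cases hv : v ∈ S
  · simp [inter_insert_of_mem hv, hv]
  · simp [inter_insert_of_notMem hv, hv]

/-- A live-edge configuration: every node chooses at most one live in-edge and a sign rule,
`some b` for the sign `b` and `none` for copying the sign of the live in-neighbour. -/
abbrev Config (V : Type*) := V → Option V × Option Bool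

section Consistency

variable {V : Type*} [Fintype V] (S : Finset V) (τ : V → ℕ) (s : V → Bool)

def LocallyConsistent (v : V) (o : Option V) (c : Option Bool) : Prop :=
  if v ∈ S then τ v = 1 ∧ s v = true
  else if 2 ≤ τ v ∧ τ v ≤ horizon V then
    ∃ x, o = some x ∧ τ x = τ v - 1 ∧ (s v = true ↔ c = some true ∨ c = none ∧ s x = true)
  else if τ v = horizon V + 1 then s v = false ∧ ∀ x, o = some x → horizon V ≤ τ x
  else False

variable {S τ s} {v : V} {o : Option V} {c : Option Bool}

lemma locallyConsistent_of_mem (hv : v ∈ S) :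
    LocallyConsistent S τ s v o c ↔ τ v = 1 ∧ s v = true := by
  rw [LocallyConsistent, if_pos hv]

lemma LocallyConsistent.range (h : LocallyConsistent S τ s v o c) (hv : v ∉ S) :
    2 ≤ τ v ∧ τ v ≤ horizon V + 1 := by
  unfold LocallyConsistent at h
  split_ifs at h <;> simp_all [horizon]
  omega

lemma LocallyConsistent.one_le (h : LocallyConsistent S τ s v o c) : 1 ≤ τ v := by
  by_cases hv : v ∈ S
  · exact ((locallyConsistent_of_mem hv).mp h).1.ge
  · exact le_trans (by norm_num) (h.range hv).1

lemma LocallyConsistent.le_horizon_succ (h : LocallyConsistent S τ s v o c) :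
    τ v ≤ horizon V + 1 := by
  by_cases hv : v ∈ S
  · rw [((locallyConsistent_of_mem hv).mp h).1]; unfold horizon; omega
  · exact (h.range hv).2

lemma locallyConsistent_of_active (hv : v ∉ S) (h₂ : 2 ≤ τ v) (hN : τ v ≤ horizon V) :
    LocallyConsistent S τ s v o c ↔
      ∃ x, o = some x ∧ τ x = τ v - 1 ∧ (s v = true ↔ c = some true ∨ c = none ∧ s x = true) := by
  rw [LocallyConsistent, if_neg hv, if_pos ⟨h₂, hN⟩]

lemma locallyConsistent_of_inactive (hv : v ∉ S) (hN : τ v = horizon V + 1) :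
    LocallyConsistent S τ s v o c ↔ s v = false ∧ ∀ x, o = some x → horizon V ≤ τ x := by
  rw [LocallyConsistent, if_neg hv, if_neg (by omega), if_pos hN]

end Consistency

section LiveEdge

variable {V : Type*} [DecidableEq V] (cfg : Config V)

def liveReach : ℕ → V → Finset V
  | 0, _ => ∅
  | k + 1, v => insert v ((cfg v).1.elim ∅ (liveReach k))

/-- The seeds in `posReach cfg k v` are those that make `v` positive within `k` steps. -/
def posReach : ℕ → V → Finset V
  | 0, _ => ∅
  | k + 1, v => match (cfg v).2 with
    | some false => {v}
    | some true => liveReach cfg (k + 1) v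
    | none => insert v ((cfg v).1.elim ∅ (posReach k))

variable [Fintype V] (S : Finset V)

def liveActive (t : ℕ) : Finset V := {v | (S ∩ liveReach cfg t v).Nonempty}

def livePos (t : ℕ) : Finset V := {v | (S ∩ posReach cfg t v).Nonempty}

lemma liveActive_zero : liveActive cfg S 0 = ∅ := by
  simp [liveActive, liveReach]

lemma mem_liveActive_succ (t : ℕ) (v : V) :
    v ∈ liveActive cfg S (t + 1) ↔ v ∈ S ∨ ∃ x, (cfg v).1 = some x ∧ x ∈ liveActive cfg S t := by
  simp only [liveActive, mem_filter, mem_univ, true_and, liveReach, inter_insert_nonempty_iff]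
  cases (cfg v).1 <;> simp

lemma liveActive_one : liveActive cfg S 1 = S := by
  ext v
  simp [mem_liveActive_succ, liveActive_zero]

lemma monotone_liveActive : Monotone (liveActive cfg S) := by
  refine monotone_nat_of_le_succ fun t => ?_
  induction t with
  | zero => simp [liveActive_zero]
  | succ t ih =>
    intro v hv
    rw [mem_liveActive_succ] at hv ⊢
    exact hv.imp_right fun ⟨x, hx, hxt⟩ => ⟨x, hx, ih hxt⟩

lemma mem_livePos_succ (t : ℕ) (v : V) :
    v ∈ livePos cfg S (t + 1) ↔ v ∈ S ∨ ((cfg v).2 = some true ∧ v ∈ liveActive cfg S (t + 1)) ∨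
      ((cfg v).2 = none ∧ ∃ x, (cfg v).1 = some x ∧ x ∈ livePos cfg S t) := by
  have hS : v ∈ S → v ∈ liveActive cfg S (t + 1) := by
    simp only [mem_liveActive_succ]
    exact Or.inl
  simp only [livePos, mem_filter, mem_univ, true_and]
  rw [posReach]
  rcases h : (cfg v).2 with _ | _ | _
  · simp only [inter_insert_nonempty_iff]
    cases (cfg v).1 <;> simp
  · by_cases hv : v ∈ S <;> simp [hv]
  · simp only [liveActive, mem_filter, mem_univ, true_and] at hS
    simp only [liveActive, mem_filter, mem_univ, true_and, reduceCtorEq, false_and, or_false]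
    exact ⟨Or.inr, fun h' => h'.elim hS id⟩

lemma livePos_subset_liveActive (t : ℕ) : livePos cfg S t ⊆ liveActive cfg S t := by
  induction t with
  | zero => simp [livePos, posReach]
  | succ t ih =>
    intro v hv
    rw [mem_livePos_succ] at hv
    rw [mem_liveActive_succ]
    rcases hv with hv | ⟨-, hv⟩ | ⟨-, x, hx, hxt⟩
    · exact Or.inl hv
    · exact (mem_liveActive_succ cfg S t v).mp hv
    · exact Or.inr ⟨x, hx, ih hxt⟩

lemma mem_livePos_iff_of_le {t k : ℕ} (htk : t ≤ k) {v : V} (hv : v ∈ liveActive cfg S t) :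
    v ∈ livePos cfg S k ↔ v ∈ livePos cfg S t := by
  induction t generalizing v k with
  | zero => simp [liveActive_zero] at hv
  | succ t ih =>
    obtain ⟨k, rfl⟩ : ∃ k', k = k' + 1 := ⟨k - 1, by omega⟩
    have hvk := monotone_liveActive cfg S htk hv
    rw [mem_livePos_succ, mem_livePos_succ]
    rcases (mem_liveActive_succ cfg S t v).mp hv with hvS | ⟨x, hx, hxt⟩
    · simp [hvS]
    · simp only [hv, hvk, hx, Option.some.injEq, exists_eq_left', and_true]
      rw [ih (by omega) hxt]

end LiveEdge

section LiveIndex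

variable {V : Type*} [Fintype V] [DecidableEq V] (cfg : Config V) (S : Finset V)

noncomputable def liveTime : V → ℕ := firstTime (liveActive cfg S) (horizon V)

noncomputable def liveSign (v : V) : Bool := decide (v ∈ livePos cfg S (horizon V))

lemma liveTime_eq_one_iff (v : V) : liveTime cfg S v = 1 ↔ v ∈ S := by
  rw [liveTime, firstTime_eq_one_iff (monotone_liveActive cfg S) (liveActive_zero cfg S)
    (by unfold horizon; omega), liveActive_one]

lemma liveSign_of_mem {v : V} (hv : v ∈ S) : liveSign cfg S v = true := by
  have : v ∈ livePos cfg S (Fintype.card V + 1) := (mem_livePos_succ cfg S _ v).mpr (Or.inl hv)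
  exact decide_eq_true this

lemma exists_parent_of_liveTime_eq {v : V} (hv : v ∉ S) {k : ℕ} (hkN : k + 2 ≤ horizon V)
    (hk : liveTime cfg S v = k + 2) : ∃ x, (cfg v).1 = some x ∧ liveTime cfg S x = k + 1 := by
  have hA := monotone_liveActive cfg S
  obtain ⟨hv₂, hv₁⟩ := (firstTime_eq_succ_iff hA hkN v).mp hk
  obtain ⟨x, hx, hx₁⟩ := ((mem_liveActive_succ cfg S _ v).mp hv₂).resolve_left hv
  exact ⟨x, hx, (firstTime_eq_succ_iff hA (by omega) x).mpr
    ⟨hx₁, fun hx₀ => hv₁ ((mem_liveActive_succ cfg S k v).mpr (Or.inr ⟨x, hx, hx₀⟩))⟩⟩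

lemma liveSign_eq_true_iff_of_parent {v x : V} (hv : v ∉ S) (hx : (cfg v).1 = some x)
    (hxA : x ∈ liveActive cfg S (horizon V - 1)) :
    liveSign cfg S v = true ↔
      (cfg v).2 = some true ∨ (cfg v).2 = none ∧ liveSign cfg S x = true := by
  obtain ⟨n, hn⟩ : ∃ n, horizon V = n + 1 := ⟨Fintype.card V, rfl⟩
  rw [hn, Nat.add_sub_cancel] at hxA
  have hvA : v ∈ liveActive cfg S (n + 1) :=
    (mem_liveActive_succ cfg S n v).mpr (Or.inr ⟨x, hx, hxA⟩)
  simp only [liveSign, decide_eq_true_iff, hn, mem_livePos_iff_of_le cfg S n.le_succ hxA]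
  rw [mem_livePos_succ]
  simp [hv, hvA, hx]

lemma locallyConsistent_liveTime (v : V) :
    LocallyConsistent S (liveTime cfg S) (liveSign cfg S) v (cfg v).1 (cfg v).2 := by
  have hA := monotone_liveActive cfg S
  have : Nonempty V := ⟨v⟩
  have hN := two_le_horizon V
  by_cases hvS : v ∈ S
  · exact (locallyConsistent_of_mem hvS).mpr
      ⟨(liveTime_eq_one_iff cfg S v).mpr hvS, liveSign_of_mem cfg S hvS⟩
  by_cases hvN : liveTime cfg S v ≤ horizon V
  · have h₂ : 2 ≤ liveTime cfg S v := by
      have := (liveTime_eq_one_iff cfg S v).not.mpr hvS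
      have : 1 ≤ liveTime cfg S v := one_le_firstTime hA (liveActive_zero cfg S) v
      omega
    obtain ⟨x, hx, hτx⟩ := exists_parent_of_liveTime_eq cfg S hvS (by omega)
      (Nat.sub_add_cancel h₂).symm
    rw [locallyConsistent_of_active hvS h₂ hvN]
    exact ⟨x, hx, by omega, liveSign_eq_true_iff_of_parent cfg S hvS hx
      ((mem_iff_firstTime_le hA (t := horizon V - 1) (by omega) x).mpr
        (show liveTime cfg S x ≤ horizon V - 1 by omega))⟩
  · have hτ : liveTime cfg S v = horizon V + 1 := le_antisymm (firstTime_le_succ v) (by omega)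
    rw [locallyConsistent_of_inactive hvS hτ]
    have hvA : v ∉ liveActive cfg S (horizon V) := (mem_iff_firstTime_le hA le_rfl v).not.mpr hvN
    refine ⟨decide_eq_false fun h => hvA (livePos_subset_liveActive cfg S _ h), fun x hx => ?_⟩
    by_contra! hlt
    obtain ⟨n, hn⟩ : ∃ n, horizon V = n + 1 := ⟨Fintype.card V, rfl⟩
    apply hvA
    rw [hn, mem_liveActive_succ]
    exact Or.inr ⟨x, hx, (mem_iff_firstTime_le hA (t := n) (by omega) x).mpr
      (show liveTime cfg S x ≤ n by omega)⟩

variable {cfg S} {τ : V → ℕ} {s : V → Bool}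

lemma mem_liveActive_iff_of_consistent (h : ∀ v, LocallyConsistent S τ s v (cfg v).1 (cfg v).2) :
    ∀ t ≤ horizon V, ∀ v, v ∈ liveActive cfg S t ↔ τ v ≤ t := by
  intro t
  induction t with
  | zero =>
    intro _ v
    simp only [liveActive_zero, notMem_empty, false_iff, not_le]
    exact (h v).one_le
  | succ t ih =>
    intro ht v
    rw [mem_liveActive_succ]
    simp only [ih (by omega)]
    by_cases hv : v ∈ S
    · simp [hv, (locallyConsistent_of_mem hv).mp (h v)]
    by_cases hvN : τ v ≤ horizon V
    · obtain ⟨x, hx, hτx, -⟩ :=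
        (locallyConsistent_of_active hv ((h v).range hv).1 hvN).mp (h v)
      simp only [hv, hx, Option.some.injEq, exists_eq_left', false_or]
      omega
    · have hτ : τ v = horizon V + 1 := le_antisymm ((h v).range hv).2 (by omega)
      obtain ⟨-, hpar⟩ := (locallyConsistent_of_inactive hv hτ).mp (h v)
      simp only [hv, false_or]
      exact ⟨fun ⟨x, hx, hxt⟩ => absurd (hpar x hx) (by omega), fun h' => by omega⟩

lemma mem_livePos_iff_of_consistent (h : ∀ v, LocallyConsistent S τ s v (cfg v).1 (cfg v).2) :
    ∀ t ≤ horizon V, ∀ v, τ v ≤ t → (v ∈ livePos cfg S t ↔ s v = true) := by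
  intro t
  induction t with
  | zero => intro _ v hv; have := (h v).one_le; omega
  | succ t ih =>
    intro ht v hvt
    rw [mem_livePos_succ]
    by_cases hv : v ∈ S
    · simp [hv, (locallyConsistent_of_mem hv).mp (h v)]
    obtain ⟨x, hx, hτx, hsv⟩ :=
      (locallyConsistent_of_active hv ((h v).range hv).1 (by omega)).mp (h v)
    simp only [hv, hx, (mem_liveActive_iff_of_consistent h _ ht v).mpr hvt, Option.some.injEq,
      exists_eq_left', false_or, and_true]
    rw [hsv, ih (by omega) x (by omega)]

lemma liveTime_eq_and_liveSign_eq (h : ∀ v, LocallyConsistent S τ s v (cfg v).1 (cfg v).2) :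
    liveTime cfg S = τ ∧ liveSign cfg S = s := by
  have hmem := mem_liveActive_iff_of_consistent h
  refine ⟨firstTime_eq_of_forall_mem_iff (monotone_liveActive cfg S)
    (fun v => (h v).le_horizon_succ) hmem, funext fun v => ?_⟩
  by_cases hvN : τ v ≤ horizon V
  · exact Bool.eq_iff_iff.mpr (by
      rw [liveSign, decide_eq_true_iff]
      exact mem_livePos_iff_of_consistent h _ le_rfl v hvN)
  · have hv : v ∉ S := fun hv => by
      have := ((locallyConsistent_of_mem hv).mp (h v)).1; unfold horizon at hvN; omega
    rw [((locallyConsistent_of_inactive hv (le_antisymm (h v).le_horizon_succ (by omega))).mp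
      (h v)).1]
    exact decide_eq_false fun hp =>
      hvN ((hmem _ le_rfl v).mp (livePos_subset_liveActive cfg S _ hp))

end LiveIndex

section LocalWeight

variable {V : Type*} (w : V → V → ℝ) (qp qm : V → ℝ)

def ruleProb (v : V) : Option Bool → ℝ
  | none => 1 - (qp v + qm v)
  | some true => qp v
  | some false => qm v

def parentProb [Fintype V] (v : V) : Option V → ℝ
  | none => 1 - ∑ x, w x v
  | some x => w x v

noncomputable def configProb [Fintype V] (cfg : Config V) : ℝ :=
  ∏ v, parentProb w v (cfg v).1 * ruleProb qp qm v (cfg v).2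

noncomputable def localWeight [Fintype V] (S : Finset V) (τ : V → ℕ) (s : V → Bool) (v : V) : ℝ :=
  ∑ oc : Option V × Option Bool, parentProb w v oc.1 * ruleProb qp qm v oc.2 *
    if LocallyConsistent S τ s v oc.1 oc.2 then 1 else 0

variable {w qp qm}

lemma sum_ruleProb (v : V) : ∑ c, ruleProb qp qm v c = 1 := by
  simp [Fintype.sum_option, ruleProb]

lemma ruleProb_nonneg (hqp : ∀ v, 0 ≤ qp v) (hqm : ∀ v, 0 ≤ qm v) (hr : ∀ v, qp v + qm v ≤ 1)
    (v : V) : ∀ c, 0 ≤ ruleProb qp qm v c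
  | none => sub_nonneg.mpr (hr v)
  | some true => hqp v
  | some false => hqm v

lemma sum_ruleProb_sign (v : V) (sv sx : Bool) :
    ∑ c, ruleProb qp qm v c *
        (if (sv = true ↔ c = some true ∨ c = none ∧ sx = true) then 1 else 0) =
      if sv then qp v + (1 - (qp v + qm v)) * (if sx then 1 else 0)
      else qm v + (1 - (qp v + qm v)) * (if sx then 0 else 1) := by
  cases sv <;> cases sx <;> simp [Fintype.sum_option, ruleProb] <;> ring

variable [Fintype V]

lemma sum_parentProb (v : V) : ∑ o, parentProb w v o = 1 := by
  simp [Fintype.sum_option, parentProb]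

lemma parentProb_nonneg (hw : ∀ x v, 0 ≤ w x v) (hw1 : ∀ v, ∑ x, w x v ≤ 1) (v : V) :
    ∀ o, 0 ≤ parentProb w v o
  | none => sub_nonneg.mpr (hw1 v)
  | some x => hw x v

lemma configProb_nonneg (hw : ∀ x v, 0 ≤ w x v) (hw1 : ∀ v, ∑ x, w x v ≤ 1)
    (hqp : ∀ v, 0 ≤ qp v) (hqm : ∀ v, 0 ≤ qm v) (hr : ∀ v, qp v + qm v ≤ 1) (cfg : Config V) :
    0 ≤ configProb w qp qm cfg :=
  prod_nonneg fun v _ => mul_nonneg (parentProb_nonneg hw hw1 v _) (ruleProb_nonneg hqp hqm hr v _)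

lemma localWeight_of_forall_rule {S : Finset V} {τ : V → ℕ} {s : V → Bool} {v : V}
    {P : Option V → Prop} (hP : ∀ o c, LocallyConsistent S τ s v o c ↔ P o) :
    localWeight w qp qm S τ s v = ∑ o, parentProb w v o * if P o then 1 else 0 := by
  rw [localWeight, Fintype.sum_prod_type]
  refine sum_congr rfl fun o _ => ?_
  simp only [hP]
  rw [← sum_mul, ← mul_sum, sum_ruleProb, mul_one]

end LocalWeight

section NodeIdentity

variable {V : Type*} [Fintype V] {w : V → V → ℝ} {qp qm : V → ℝ}
  {S : Finset V} {τ : V → ℕ} {s : V → Bool} {v : V}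

lemma thresholdProb_mul_signProb_of_mem (hv : v ∈ S) :
    thresholdProb w S τ s v * signProb w qp qm S τ s v = localWeight w qp qm S τ s v := by
  rw [localWeight_of_forall_rule fun o c => locallyConsistent_of_mem hv, ← sum_mul,
    sum_parentProb, one_mul, thresholdProb, signProb, if_pos hv, if_pos hv, mul_one]
  split_ifs <;> simp_all

lemma localWeight_of_active (hv : v ∉ S) (h₂ : 2 ≤ τ v) (hN : τ v ≤ horizon V) :
    localWeight w qp qm S τ s v = ∑ x with τ x = τ v - 1, w x v * ∑ c, ruleProb qp qm v c *
      (if (s v = true ↔ c = some true ∨ c = none ∧ s x = true) then 1 else 0) := by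
  have hloc := fun o c => locallyConsistent_of_active (s := s) (o := o) (c := c) hv h₂ hN
  rw [localWeight, Fintype.sum_prod_type, Fintype.sum_option, sum_filter]
  simp only [hloc, reduceCtorEq, false_and, exists_false, if_false, mul_zero, sum_const_zero,
    zero_add]
  refine sum_congr rfl fun x _ => ?_
  by_cases hx : τ x = τ v - 1
  · simp only [Option.some.injEq, exists_eq_left', hx, true_and, if_true, mul_sum, parentProb,
      mul_assoc]
  · simp [hx]

lemma thresholdProb_of_active [DecidableEq V] (hτ : ∀ x, 1 ≤ τ x) (hv : v ∉ S) (h₂ : 2 ≤ τ v)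
    (hN : τ v ≤ horizon V) : thresholdProb w S τ s v = ∑ x with τ x = τ v - 1, w x v := by
  have hsub : ∀ t, inWeight w τ (t + 1) v - inWeight w τ t v = ∑ x with τ x = t + 1, w x v :=
    fun t => by rw [inWeight, inWeight, ← sum_sdiff_eq_sub (activeBy_mono τ t.le_succ),
      activeBy_sdiff]
  have h0 : inWeight w τ 0 v = 0 := by
    simp only [inWeight, activeBy]
    exact sum_eq_zero fun x hx => by simp at hx; have := hτ x; omega
  rw [thresholdProb, if_neg hv, if_pos ⟨h₂, hN⟩]
  split_ifs with h2
  · simpa [h0, h2] using hsub 0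
  · rw [show τ v - 1 = τ v - 2 + 1 by omega, hsub]

lemma sum_mul_ite_sign (t : ℕ) :
    ∑ x with τ x = t, w x v * (if s x then 1 else 0) = ∑ x with τ x = t ∧ s x = true, w x v := by
  rw [← filter_filter, sum_filter (p := fun x => s x = true)]
  exact sum_congr rfl fun x _ => by split_ifs <;> simp

lemma mul_posProb (hw : ∀ x v, 0 ≤ w x v) (t : ℕ) :
    (∑ x with τ x = t, w x v) * posProb w qp qm τ s t v =
      ∑ x with τ x = t, w x v * (qp v + (1 - (qp v + qm v)) * if s x then 1 else 0) := by
  have hle : ∑ x with τ x = t ∧ s x = true, w x v ≤ ∑ x with τ x = t, w x v :=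
    sum_le_sum_of_subset_of_nonneg (fun x hx => by simp_all) fun x _ _ => hw x v
  have h0 : 0 ≤ ∑ x with τ x = t ∧ s x = true, w x v := sum_nonneg fun x _ => hw x v
  have hsplit : ∑ x with τ x = t, w x v * (qp v + (1 - (qp v + qm v)) * if s x then 1 else 0) =
      qp v * (∑ x with τ x = t, w x v) +
        (1 - (qp v + qm v)) * ∑ x with τ x = t ∧ s x = true, w x v := by
    rw [← sum_mul_ite_sign, mul_sum, mul_sum, ← sum_add_distrib]
    exact sum_congr rfl fun x _ => by ring
  rw [hsplit, posProb]
  rcases (h0.trans hle).eq_or_lt with hD | hD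
  · rw [← hD, le_antisymm (hD ▸ hle) h0]
    ring
  · field_simp

lemma thresholdProb_mul_signProb_of_active [DecidableEq V] (hw : ∀ x v, 0 ≤ w x v)
    (hτ : ∀ x, 1 ≤ τ x) (hv : v ∉ S) (h₂ : 2 ≤ τ v) (hN : τ v ≤ horizon V) :
    thresholdProb w S τ s v * signProb w qp qm S τ s v = localWeight w qp qm S τ s v := by
  have hmul := mul_posProb (qp := qp) (qm := qm) (τ := τ) (s := s) (v := v) hw (τ v - 1)
  rw [localWeight_of_active hv h₂ hN, thresholdProb_of_active hτ hv h₂ hN, signProb, if_neg hv,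
    if_pos ⟨h₂, hN⟩]
  simp only [sum_ruleProb_sign]
  cases s v
  · simp only [Bool.false_eq_true, if_false]
    rw [mul_sub, mul_one, hmul, ← sum_sub_distrib]
    exact sum_congr rfl fun x _ => by split_ifs <;> ring
  · simp only [if_true, hmul]

lemma thresholdProb_mul_signProb_of_inactive (hv : v ∉ S) (hN : τ v = horizon V + 1) :
    thresholdProb w S τ s v * signProb w qp qm S τ s v = localWeight w qp qm S τ s v := by
  have hact : ¬(2 ≤ τ v ∧ τ v ≤ horizon V) := by omega
  rw [localWeight_of_forall_rule fun o c => locallyConsistent_of_inactive hv hN,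
    Fintype.sum_option]
  simp only [thresholdProb, signProb, hv, hact, if_false]
  rw [if_pos hN, if_pos hN]
  cases s v
  · have hsplit := sum_filter_add_sum_filter_not univ (fun x => τ x ≤ horizon V - 1) (w · v)
    have hnot : ∀ x, ¬τ x ≤ horizon V - 1 ↔ horizon V ≤ τ x := fun x => by unfold horizon; omega
    simp only [hnot] at hsplit
    simp only [Option.some.injEq, forall_eq', Bool.false_eq_true, true_and, if_false, if_true,
      mul_one, reduceCtorEq, IsEmpty.forall_iff, implies_true, parentProb, mul_ite, mul_zero,
      ← sum_filter]
    rw [inWeight, activeBy]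
    linarith
  · simp

lemma thresholdProb_eq_zero_of_range (hv : v ∉ S) (h : ¬(2 ≤ τ v ∧ τ v ≤ horizon V + 1)) :
    thresholdProb w S τ s v = 0 := by
  have hact : ¬(2 ≤ τ v ∧ τ v ≤ horizon V) := by omega
  have hinact : τ v ≠ horizon V + 1 := by unfold horizon at *; omega
  simp only [thresholdProb, hv, hact, hinact, if_false]

lemma localWeight_eq_zero_of_forall (h : ∀ o c, ¬LocallyConsistent S τ s v o c) :
    localWeight w qp qm S τ s v = 0 :=
  sum_eq_zero fun oc _ => by simp [h]

lemma thresholdProb_mul_signProb [DecidableEq V] (hw : ∀ x v, 0 ≤ w x v) (hτ : ∀ x, 1 ≤ τ x)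
    (v : V) :
    thresholdProb w S τ s v * signProb w qp qm S τ s v = localWeight w qp qm S τ s v := by
  by_cases hv : v ∈ S
  · exact thresholdProb_mul_signProb_of_mem hv
  by_cases hact : 2 ≤ τ v ∧ τ v ≤ horizon V
  · exact thresholdProb_mul_signProb_of_active hw hτ hv hact.1 hact.2
  by_cases hN : τ v = horizon V + 1
  · exact thresholdProb_mul_signProb_of_inactive hv hN
  rw [thresholdProb_eq_zero_of_range hv (by omega), zero_mul,
    localWeight_eq_zero_of_forall fun o c h => by have := h.range hv; omega]

lemma thresholdProb_eq_zero_of_eq_zero (h : τ v = 0) : thresholdProb w S τ s v = 0 := by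
  by_cases hv : v ∈ S
  · simp [thresholdProb, hv, h]
  · exact thresholdProb_eq_zero_of_range hv (by omega)

lemma not_locallyConsistent_of_eq_zero (h : τ v = 0) (o : Option V) (c : Option Bool) :
    ¬LocallyConsistent S τ s v o c := by
  by_cases hv : v ∈ S
  · simp [locallyConsistent_of_mem hv, h]
  · exact fun hl => by have := hl.range hv; omega

variable (w qp qm S τ s) in
lemma prod_thresholdProb_mul_signProb [DecidableEq V] (hw : ∀ x v, 0 ≤ w x v) :
    ∏ v, thresholdProb w S τ s v * signProb w qp qm S τ s v =
      ∑ cfg : Config V, configProb w qp qm cfg *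
        if ∀ v, LocallyConsistent S τ s v (cfg v).1 (cfg v).2 then 1 else 0 := by
  have hlocal : ∏ v, thresholdProb w S τ s v * signProb w qp qm S τ s v =
      ∏ v, localWeight w qp qm S τ s v := by
    by_cases hτ : ∀ x, 1 ≤ τ x
    · exact prod_congr rfl fun v _ => thresholdProb_mul_signProb hw hτ v
    · obtain ⟨x, hx⟩ : ∃ x, τ x = 0 := by
        simp only [not_forall, not_le, Nat.lt_one_iff] at hτ
        exact hτ
      rw [prod_eq_zero (mem_univ x) (by rw [thresholdProb_eq_zero_of_eq_zero hx, zero_mul]),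
        prod_eq_zero (mem_univ x)
          (localWeight_eq_zero_of_forall (not_locallyConsistent_of_eq_zero hx))]
  rw [hlocal]
  simp only [localWeight, Fintype.prod_sum]
  refine sum_congr rfl fun cfg _ => ?_
  rw [configProb, ← Fintype.prod_boole, ← prod_mul_distrib]

end NodeIdentity

section Influence

variable {V : Type*} [Fintype V] [DecidableEq V]

noncomputable def liveIndex (cfg : Config V) (S : Finset V) : Index V :=
  (fun v => ⟨liveTime cfg S v, Nat.lt_succ_of_le (firstTime_le_succ v)⟩, liveSign cfg S)

lemma forall_locallyConsistent_iff (cfg : Config V) (S : Finset V) (i : Index V) :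
    (∀ v, LocallyConsistent S i.time i.2 v (cfg v).1 (cfg v).2) ↔ i = liveIndex cfg S := by
  refine ⟨fun h => ?_, by rintro rfl; exact locallyConsistent_liveTime cfg S⟩
  obtain ⟨hτ, hs⟩ := liveTime_eq_and_liveSign_eq h
  refine Prod.ext (funext fun v => Fin.ext ?_) hs.symm
  exact (congrFun hτ v).symm

lemma card_liveSign (cfg : Config V) (S : Finset V) :
    #{v | (liveIndex cfg S).2 v = true} = coverage (posReach cfg (horizon V)) S := by
  rw [coverage]
  congr 1
  ext v
  rw [mem_filter, mem_filter]
  simp only [mem_univ, true_and, liveIndex]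
  rw [liveSign, decide_eq_true_iff, livePos, mem_filter]
  simp

lemma ltnPosInfluence_eq_sum_config {w : V → V → ℝ} {qp qm : V → ℝ} (hw : ∀ x v, 0 ≤ w x v)
    (hw1 : ∀ v, ∑ x, w x v ≤ 1) (hqp : ∀ v, 0 ≤ qp v) (hqm : ∀ v, 0 ≤ qm v)
    (hr : ∀ v, qp v + qm v ≤ 1) (S : Finset V) :
    ltnPosInfluence w qp qm S =
      ∑ cfg : Config V, configProb w qp qm cfg * coverage (posReach cfg (horizon V)) S := by
  rw [ltnPosInfluence_eq_sum_index S hw hw1 hqp hqm hr]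
  simp only [prod_thresholdProb_mul_signProb w qp qm S _ _ hw, sum_mul,
    forall_locallyConsistent_iff]
  rw [sum_comm]
  refine sum_congr rfl fun cfg _ => ?_
  rw [sum_eq_single (liveIndex cfg S) (fun i _ hi => by simp [hi]) (by simp), if_pos rfl,
    mul_one, card_liveSign]

end Influence

end LTN

/-- under the LT-N diffusion model on a finite directed graph with admissible
edge weights (`w ≥ 0`, incoming weight sums at most `1`) and admissible autonomy factors
(`q⁺, q⁻ ≥ 0` with `q⁺ + q⁻ ≤ 1`), the expected positive influence `f⁺` is monotone and
submodular as a function of the seed set. -/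
theorem ltnPosInfluence_monotone_submodular {V : Type*} [Fintype V] [DecidableEq V]
    (w : V → V → ℝ) (qp qm : V → ℝ)
    (hw_nonneg : ∀ u v : V, 0 ≤ w u v)
    (hw_sum : ∀ v : V, ∑ u : V, w u v ≤ 1)
    (hqp : ∀ v : V, 0 ≤ qp v) (hqm : ∀ v : V, 0 ≤ qm v)
    (hr : ∀ v : V, qp v + qm v ≤ 1) :
    (∀ S T : Finset V, S ⊆ T → ltnPosInfluence w qp qm S ≤ ltnPosInfluence w qp qm T) ∧
    (∀ S T : Finset V, ∀ v : V, S ⊆ T → v ∉ T →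
      ltnPosInfluence w qp qm (insert v T) - ltnPosInfluence w qp qm T ≤
        ltnPosInfluence w qp qm (insert v S) - ltnPosInfluence w qp qm S) := by
  have hf := LTN.ltnPosInfluence_eq_sum_config hw_nonneg hw_sum hqp hqm hr
  have hp := LTN.configProb_nonneg hw_nonneg hw_sum hqp hqm hr
  refine ⟨fun S T hST => ?_, fun S T v hST _ => ?_⟩
  · rw [hf, hf]
    exact Finset.sum_le_sum fun cfg _ => mul_le_mul_of_nonneg_left
      (by exact_mod_cast LTN.coverage_mono _ hST) (hp cfg)
  · rw [hf, hf, hf, hf, ← Finset.sum_sub_distrib, ← Finset.sum_sub_distrib]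
    refine Finset.sum_le_sum fun cfg _ => ?_
    rw [← mul_sub, ← mul_sub]
    refine mul_le_mul_of_nonneg_left ?_ (hp cfg)
    set R := LTN.posReach cfg (LTN.horizon V)
    have : (LTN.coverage R (insert v T) : ℝ) + LTN.coverage R S ≤
        LTN.coverage R (insert v S) + LTN.coverage R T := by
      exact_mod_cast LTN.coverage_insert_add_le R hST v
    linarith
end

section
/- Suppose f(S, w_θ) is continuous in θ ∈ ℝ^d for each fixed S ⊆ V and f^opt(w_θ) := max_{|S| ≤ K} f(S, w_θ) > 0 for all θ. Fix α ∈ (0,1) and θ* ∈ ℝ^d, and define A(θ, α) = {S ⊆ V : f(S, w_θ) ≥ α · f^opt(w_θ)}. If min_{S ∈ A(θ*, α)} f(S, w_{θ*}) > α · f^opt(w_{θ*}), then there exists δ > 0 such that A(θ, α) = A(θ*, α) for all θ with ‖θ − θ*‖ ≤ δ. -/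
/-- The optimal-value map `θ ↦ f^opt(w_θ) = max_{S ⊆ V, |S| ≤ K} f(S, w_θ)`, where `f(S, w_θ)`
is the expected influence spread of seed set `S` under edge weights parameterized by `θ`. -/
noncomputable def optVal {V : Type*} [Fintype V] [DecidableEq V] {d : ℕ} (K : ℕ)
    (f : Finset V → EuclideanSpace ℝ (Fin d) → ℝ) (θ : EuclideanSpace ℝ (Fin d)) : ℝ :=
  ((Finset.univ : Finset (Finset V)).filter fun S => S.card ≤ K).sup'
    ⟨∅, by simp⟩ fun S => f S θ

/-- The `α`-approximation seed sets with respect to parameter `θ`: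
`A(θ, α) = {S ⊆ V : f(S, w_θ) ≥ α · f^opt(w_θ)}`. -/
def approxSets {V : Type*} [Fintype V] [DecidableEq V] {d : ℕ} (K : ℕ)
    (f : Finset V → EuclideanSpace ℝ (Fin d) → ℝ) (α : ℝ) (θ : EuclideanSpace ℝ (Fin d)) :
    Set (Finset V) :=
  {S | α * optVal K f θ ≤ f S θ}

lemma optVal_continuous {V : Type*} [Fintype V] [DecidableEq V] {d : ℕ} (K : ℕ)
    (f : Finset V → EuclideanSpace ℝ (Fin d) → ℝ)
    (hf_cont : ∀ S : Finset V, Continuous fun θ => f S θ) :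
    Continuous (optVal K f) :=
  Continuous.finset_sup'_apply ⟨∅, by simp⟩ fun S _ => hf_cont S

/-- if `f(S, w_θ)` is continuous in `θ` for each `S`, `f^opt(w_θ) > 0` for all
`θ`, and `min_{S ∈ A(θ*, α)} f(S, w_{θ*}) > α · f^opt(w_{θ*})`, then there exists `δ > 0`
such that `A(θ, α) = A(θ*, α)` whenever `‖θ − θ*‖ ≤ δ`. -/
theorem approxSets_locally_invariant {V : Type*} [Fintype V] [DecidableEq V] {d : ℕ}
    (K : ℕ) (hK : 0 < K)
    (f : Finset V → EuclideanSpace ℝ (Fin d) → ℝ)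
    (hf_nonneg : ∀ (S : Finset V) (θ : EuclideanSpace ℝ (Fin d)), 0 ≤ f S θ)
    (hf_cont : ∀ S : Finset V, Continuous fun θ => f S θ)
    (hopt_pos : ∀ θ : EuclideanSpace ℝ (Fin d), 0 < optVal K f θ)
    (α : ℝ) (hα : α ∈ Set.Ioo (0 : ℝ) 1)
    (θstar : EuclideanSpace ℝ (Fin d))
    (hmin : ∀ S ∈ approxSets K f α θstar, α * optVal K f θstar < f S θstar) :
    ∃ δ > 0, ∀ θ : EuclideanSpace ℝ (Fin d),
      ‖θ - θstar‖ ≤ δ → approxSets K f α θ = approxSets K f α θstar := by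
  -- for each S, h S θ = f S θ - α * optVal K f θ is continuous and nonzero at θ*
  set h : Finset V → EuclideanSpace ℝ (Fin d) → ℝ :=
    fun S θ => f S θ - α * optVal K f θ with hh
  have hcont : ∀ S, Continuous (h S) := fun S =>
    (hf_cont S).sub (continuous_const.mul (optVal_continuous K f hf_cont))
  have hne : ∀ S : Finset V, h S θstar ≠ 0 := by
    intro S
    by_cases hS : S ∈ approxSets K f α θstar
    · have := hmin S hS; simp only [hh]; linarith
    · have : ¬ α * optVal K f θstar ≤ f S θstar := hS
      simp only [hh]; intro hc; exact this (by linarith)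
  -- choose δ_S for each S
  have key : ∀ S : Finset V, ∃ δ > 0, ∀ θ : EuclideanSpace ℝ (Fin d),
      ‖θ - θstar‖ ≤ δ → (0 ≤ h S θ ↔ 0 ≤ h S θstar) := by
    intro S
    have hε : 0 < |h S θstar| := abs_pos.mpr (hne S)
    have := Metric.continuous_iff.mp (hcont S) θstar _ hε
    obtain ⟨δ, hδpos, hδ⟩ := this
    refine ⟨δ / 2, by positivity, fun θ hθ => ?_⟩
    have hd : dist θ θstar < δ := by
      rw [dist_eq_norm]; linarith
    have hlt : |h S θ - h S θstar| < |h S θstar| := by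
      have := hδ θ hd; rwa [Real.dist_eq] at this
    rcases lt_or_ge (h S θstar) 0 with hneg | hpos
    · constructor
      · intro h0
        have : |h S θstar| = -(h S θstar) := abs_of_neg hneg
        rw [this, abs_lt] at hlt; linarith
      · intro h0; linarith
    · constructor
      · intro _; exact hpos
      · intro _
        have : |h S θstar| = h S θstar := abs_of_nonneg hpos
        rw [this, abs_lt] at hlt; linarith
  choose δS hδSpos hδS using key
  obtain ⟨δ, hδpos, hδle⟩ : ∃ δ > 0, ∀ S : Finset V, δ ≤ δS S := by
    refine ⟨(Finset.univ : Finset (Finset V)).inf' ⟨∅, by simp⟩ δS, ?_, ?_⟩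
    · exact (Finset.lt_inf'_iff _).mpr fun S _ => hδSpos S
    · exact fun S => Finset.inf'_le _ (Finset.mem_univ S)
  refine ⟨δ, hδpos, fun θ hθ => ?_⟩
  ext S
  have := hδS S θ (le_trans hθ (hδle S))
  simp only [approxSets, Set.mem_setOf_eq]
  rw [← sub_nonneg, ← sub_nonneg (a := f S θstar)]
  exact this
end

section
/- Let x_1, …, x_{d'} ∈ ℝ^{d'} with λ := λ_min(Σ_{i=1}^{d'} x_i x_iᵀ) > 0, let k ≥ 2 and q ≥ 1 be integers, let w_1, …, w_{d'} ∈ [0,1] with w_min = min_i w_i, and let Z_1, …, Z_{d'} be independent random variables with Z_i ~ Binomial(k, w_i). Set ε_k = sqrt(q·log k/(2k)) and V = I + Σ_{i=1}^{d'} Z_i·x_i x_iᵀ. If w_min ≥ ε_k, then with probability at least 1 − d'/k^q, λ_min(V) ≥ k·(w_min − ε_k)·λ. -/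
/-!
A union bound over the `d'` coordinates reduces the claim to a lower-tail bound for each `Z_i`.
By the Chernoff–Hoeffding bound, `P(Z_i < k (w_i - ε)) ≤ exp (-2 k ε²)`, and `ε_k` is chosen so
that this equals `k^(-q)`. Off the bad event every `Z_i ≥ c := k (w_min - ε) ≥ 0`, so the quadratic
form of `V` dominates `c` times that of `Σ x_i x_iᵀ`, which in turn dominates `c λ |v|²`; the
Rayleigh characterization of `λ_min` for symmetric matrices turns this into `λ_min(V) ≥ c λ`.
-/

open MeasureTheory ProbabilityTheory
open scoped ENNReal

/-- The smallest eigenvalue of a (symmetric) real matrix, defined as the infimum of its set of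
(real) eigenvalues. -/
noncomputable def lambdaMin {n : Type*} [Fintype n] [DecidableEq n]
    (M : Matrix n n ℝ) : ℝ :=
  sInf {r : ℝ | ∃ v : n → ℝ, v ≠ 0 ∧ M.mulVec v = r • v}

open Real Finset Matrix

section BinomialTail

lemma one_sub_add_mul_exp_le {p : ℝ} (hp : p ∈ Set.Icc 0 1) (t : ℝ) :
    1 - p + p * exp t ≤ exp (p * t + t ^ 2 / 8) := by
  let ν : Measure ℝ := Ber(1, 0, ⟨p, hp⟩)
  have hsupp : ∀ᵐ x ∂ν, x ∈ Set.Icc (0 : ℝ) 1 := by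
    rw [ae_iff]
    exact bernoulliMeasure_apply_of_notMem_of_notMem _ measurableSet_Icc.compl (by simp) (by simp)
  have hoeffding := (hasSubgaussianMGF_of_mem_Icc (X := id) aemeasurable_id hsupp).mgf_le t
  simp only [mgf, id_eq, integral_bernoulliMeasure, smul_eq_mul, mul_one, mul_zero, add_zero,
    zero_sub, mul_neg, sub_zero, nnnorm_one, one_div, inv_pow, NNReal.coe_inv, NNReal.coe_pow,
    NNReal.coe_ofNat, ν] at hoeffding
  calc 1 - p + p * exp t = exp (p * t) * (p * exp (t * (1 - p)) + (1 - p) * exp (-(t * p))) := by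
        rw [mul_add, mul_left_comm, ← exp_add, mul_left_comm, ← exp_add,
          show p * t + t * (1 - p) = t by ring, show p * t + -(t * p) = 0 by ring, exp_zero]
        ring
    _ ≤ exp (p * t) * exp (t ^ 2 / 8) := by
        gcongr
        exact hoeffding.trans_eq (by ring_nf)
    _ = exp (p * t + t ^ 2 / 8) := (exp_add _ _).symm

lemma binomial_term_nonneg (k m : ℕ) {p : ℝ} (hp : p ∈ Set.Icc 0 1) :
    0 ≤ (k.choose m : ℝ) * p ^ m * (1 - p) ^ (k - m) :=
  mul_nonneg (mul_nonneg (Nat.cast_nonneg _) (pow_nonneg hp.1 _))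
    (pow_nonneg (sub_nonneg.mpr hp.2) _)

lemma sum_range_ceil_binomial_le_exp_mul_pow (k : ℕ) {p : ℝ} (hp : p ∈ Set.Icc 0 1) (a : ℝ)
    {s : ℝ} (hs : 0 ≤ s) :
    ∑ m ∈ range ⌈a⌉₊, (k.choose m : ℝ) * p ^ m * (1 - p) ^ (k - m) ≤
      exp (s * a) * (p * exp (-s) + (1 - p)) ^ k := by
  set g : ℕ → ℝ := fun m => exp (s * (a - m)) * ((k.choose m : ℝ) * p ^ m * (1 - p) ^ (k - m))
  calc ∑ m ∈ range ⌈a⌉₊, (k.choose m : ℝ) * p ^ m * (1 - p) ^ (k - m)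
      ≤ ∑ m ∈ range ⌈a⌉₊, g m := by
        refine sum_le_sum fun m hm =>
          le_mul_of_one_le_left (binomial_term_nonneg k m hp) (one_le_exp ?_)
        have : (m : ℝ) < a := Nat.lt_ceil.mp (mem_range.mp hm)
        nlinarith
    _ = ∑ m ∈ range ⌈a⌉₊ with m ≤ k, g m := by
        refine (sum_filter_of_ne fun m _ hm => ?_).symm
        by_contra! hkm
        simp [g, Nat.choose_eq_zero_of_lt hkm] at hm
    _ ≤ ∑ m ∈ range (k + 1), g m :=
        sum_le_sum_of_subset_of_nonneg
          (fun m hm => by simp only [mem_filter, mem_range, Order.lt_add_one_iff] at hm ⊢; omega)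
          fun m _ _ => mul_nonneg (exp_pos _).le (binomial_term_nonneg k m hp)
    _ = exp (s * a) * (p * exp (-s) + (1 - p)) ^ k := by
        rw [add_pow, mul_sum]
        refine sum_congr rfl fun m _ => ?_
        simp only [g]
        rw [mul_pow, ← exp_nat_mul, show s * (a - m) = s * a + m * -s by ring, exp_add]
        ring

lemma binomial_lower_tail_le (k : ℕ) {p ε : ℝ} (hp : p ∈ Set.Icc 0 1) (hε : 0 ≤ ε) :
    ∑ m ∈ range ⌈k * (p - ε)⌉₊, (k.choose m : ℝ) * p ^ m * (1 - p) ^ (k - m) ≤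
      exp (-(2 * k * ε ^ 2)) :=
  -- the Chernoff exponent `-s k ε + k s² / 8` is minimized at `s = 4ε`
  calc _ ≤ exp (4 * ε * (k * (p - ε))) * (p * exp (-(4 * ε)) + (1 - p)) ^ k :=
        sum_range_ceil_binomial_le_exp_mul_pow k hp _ (by positivity)
    _ ≤ exp (4 * ε * (k * (p - ε))) * exp (p * -(4 * ε) + (-(4 * ε)) ^ 2 / 8) ^ k := by
        gcongr
        · exact add_nonneg (mul_nonneg hp.1 (exp_pos _).le) (sub_nonneg.mpr hp.2)
        · linarith [one_sub_add_mul_exp_le hp (-(4 * ε))]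
    _ = exp (-(2 * k * ε ^ 2)) := by
        rw [← exp_nat_mul, ← exp_add]
        ring_nf

lemma measure_lt_ceil_le_of_binomial {Ω : Type*} [MeasurableSpace Ω] (μ : Measure Ω)
    {Z : Ω → ℕ} {k : ℕ} {p ε : ℝ} (hp : p ∈ Set.Icc 0 1) (hε : 0 ≤ ε)
    (hZ : ∀ m : ℕ, μ {ω | Z ω = m} =
      ENNReal.ofReal ((k.choose m : ℝ) * p ^ m * (1 - p) ^ (k - m))) :
    μ {ω | Z ω < ⌈k * (p - ε)⌉₊} ≤ ENNReal.ofReal (exp (-(2 * k * ε ^ 2))) :=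
  calc μ {ω | Z ω < ⌈k * (p - ε)⌉₊}
      = μ (⋃ m ∈ range ⌈k * (p - ε)⌉₊, {ω | Z ω = m}) := by
        congr 1; ext ω; simp
    _ ≤ ∑ m ∈ range ⌈k * (p - ε)⌉₊, μ {ω | Z ω = m} := measure_biUnion_finset_le _ _
    _ = ENNReal.ofReal
          (∑ m ∈ range ⌈k * (p - ε)⌉₊, (k.choose m : ℝ) * p ^ m * (1 - p) ^ (k - m)) := by
        rw [ENNReal.ofReal_sum_of_nonneg]
        · simp only [hZ]
        · exact fun m _ => binomial_term_nonneg k m hp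
    _ ≤ ENNReal.ofReal (exp (-(2 * k * ε ^ 2))) :=
        ENNReal.ofReal_le_ofReal (binomial_lower_tail_le k hp hε)

lemma exp_neg_two_mul_sqrt_sq {k : ℝ} (hk : 1 ≤ k) (q : ℕ) :
    exp (-(2 * k * sqrt (q * log k / (2 * k)) ^ 2)) = (k ^ q)⁻¹ := by
  have hk0 : 0 < k := by linarith
  rw [sq_sqrt (by have := log_nonneg hk; positivity), mul_div_cancel₀ _ (by positivity), exp_neg,
    exp_nat_mul, exp_log hk0]

end BinomialTail

section LambdaMin

variable {n ι : Type*} [Fintype n] [Fintype ι]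

lemma isHermitian_sum_smul_vecMulVec (x : ι → n → ℝ) (z : ι → ℝ) :
    (∑ i, z i • vecMulVec (x i) (x i)).IsHermitian :=
  isSelfAdjoint_sum _ fun i _ =>
    (posSemidef_vecMulVec_self_star (x i)).isHermitian.smul (IsSelfAdjoint.all (z i))

lemma dotProduct_sum_smul_vecMulVec_mulVec (x : ι → n → ℝ) (z : ι → ℝ) (v : n → ℝ) :
    v ⬝ᵥ (∑ i, z i • vecMulVec (x i) (x i)) *ᵥ v = ∑ i, z i * (x i ⬝ᵥ v) ^ 2 := by
  simp [sum_mulVec, dotProduct_sum, smul_mulVec, vecMulVec_mulVec, dotProduct_smul, sq,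
    dotProduct_comm (x _) v]

variable [DecidableEq n]

lemma setOf_mulVec_eq_smul_eq_spectrum {K : Type*} [Field K] (M : Matrix n n K) :
    {r : K | ∃ v : n → K, v ≠ 0 ∧ M *ᵥ v = r • v} = spectrum K M := by
  ext r
  rw [Set.mem_ofPred_eq, ← spectrum_toLin', ← Module.End.hasEigenvalue_iff_mem_spectrum,
    Module.End.hasEigenvalue_iff, Submodule.ne_bot_iff]
  simp [and_comm]

namespace Matrix.IsHermitian

variable {M : Matrix n n ℝ}

lemma lambdaMin_eq_iInf_eigenvalues (hM : M.IsHermitian) :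
    lambdaMin M = ⨅ i, hM.eigenvalues i := by
  rw [lambdaMin, setOf_mulVec_eq_smul_eq_spectrum, hM.spectrum_real_eq_range_eigenvalues,
    sInf_range]

lemma lambdaMin_mul_dotProduct_self_le (hM : M.IsHermitian) (v : n → ℝ) :
    lambdaMin M * (v ⬝ᵥ v) ≤ v ⬝ᵥ M *ᵥ v := by
  set c := lambdaMin M
  have hpsd : (M - algebraMap ℝ _ c).PosSemidef := by
    refine posSemidef_iff_isHermitian_and_spectrum_nonneg.mpr ⟨?_, ?_⟩
    · rw [Algebra.algebraMap_eq_smul_one]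
      exact hM.sub (isHermitian_one.smul (IsSelfAdjoint.all c))
    · rw [← spectrum.sub_singleton_eq, hM.spectrum_real_eq_range_eigenvalues]
      rintro _ ⟨_, ⟨i, rfl⟩, _, rfl, rfl⟩
      exact sub_nonneg.mpr <| hM.lambdaMin_eq_iInf_eigenvalues ▸
        ciInf_le (Set.finite_range _).bddBelow i
  simpa [Algebra.algebraMap_eq_smul_one, sub_mulVec, smul_mulVec, dotProduct_sub] using
    hpsd.dotProduct_mulVec_nonneg v

lemma le_lambdaMin_iff [Nonempty n] (hM : M.IsHermitian) {c : ℝ} :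
    c ≤ lambdaMin M ↔ ∀ v : n → ℝ, c * (v ⬝ᵥ v) ≤ v ⬝ᵥ M *ᵥ v := by
  refine ⟨fun hc v => ?_, fun h => ?_⟩
  · exact (mul_le_mul_of_nonneg_right hc (dotProduct_self_star_nonneg v)).trans
      (hM.lambdaMin_mul_dotProduct_self_le v)
  · rw [lambdaMin]
    refine le_csInf ?_ fun r ⟨v, hv, hMv⟩ => ?_
    · rw [setOf_mulVec_eq_smul_eq_spectrum, hM.spectrum_real_eq_range_eigenvalues]
      exact Set.range_nonempty _
    · have hpos : 0 < v ⬝ᵥ v := dotProduct_self_star_pos_iff.mpr hv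
      have hquad := h v
      rw [hMv, dotProduct_smul, smul_eq_mul] at hquad
      exact le_of_mul_le_mul_right hquad hpos

end Matrix.IsHermitian

lemma mul_lambdaMin_sum_vecMulVec_le [Nonempty n] (x : ι → n → ℝ) {c : ℝ} (hc : 0 ≤ c)
    {z : ι → ℝ} (hz : ∀ i, c ≤ z i) :
    c * lambdaMin (∑ i, vecMulVec (x i) (x i)) ≤
      lambdaMin (1 + ∑ i, z i • vecMulVec (x i) (x i)) := by
  have hS := isHermitian_sum_smul_vecMulVec x 1
  simp only [Pi.one_apply, one_smul] at hS
  rw [(isHermitian_one.add (isHermitian_sum_smul_vecMulVec x z)).le_lambdaMin_iff]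
  intro v
  have hquadS := dotProduct_sum_smul_vecMulVec_mulVec x 1 v
  simp only [Pi.one_apply, one_smul, one_mul] at hquadS
  calc c * lambdaMin (∑ i, vecMulVec (x i) (x i)) * (v ⬝ᵥ v)
      ≤ c * (v ⬝ᵥ (∑ i, vecMulVec (x i) (x i)) *ᵥ v) := by
        rw [mul_assoc]
        exact mul_le_mul_of_nonneg_left (hS.lambdaMin_mul_dotProduct_self_le v) hc
    _ = ∑ i, c * (x i ⬝ᵥ v) ^ 2 := by rw [hquadS, mul_sum]
    _ ≤ ∑ i, z i * (x i ⬝ᵥ v) ^ 2 :=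
        sum_le_sum fun i _ => mul_le_mul_of_nonneg_right (hz i) (sq_nonneg _)
    _ ≤ v ⬝ᵥ v + ∑ i, z i * (x i ⬝ᵥ v) ^ 2 :=
        le_add_of_nonneg_left (dotProduct_self_star_nonneg v)
    _ = v ⬝ᵥ (1 + ∑ i, z i • vecMulVec (x i) (x i)) *ᵥ v := by
        rw [add_mulVec, one_mulVec, dotProduct_add, dotProduct_sum_smul_vecMulVec_mulVec]

end LambdaMin

theorem lambdaMin_covariance_lower_bound_general
    {Ω : Type*} [MeasurableSpace Ω] (μ : Measure Ω) [IsProbabilityMeasure μ]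
    (d' : ℕ) (hd' : 0 < d') (k q : ℕ) (hk : 2 ≤ k)
    (x : Fin d' → (Fin d' → ℝ)) (lam : ℝ)
    (hlam : lam = lambdaMin (∑ i, Matrix.vecMulVec (x i) (x i)))
    (w : Fin d' → ℝ) (hw : ∀ i, w i ∈ Set.Icc (0 : ℝ) 1)
    (wmin : ℝ) (hwmin : IsLeast (Set.range w) wmin)
    (hcond : Real.sqrt ((q : ℝ) * Real.log k / (2 * k)) ≤ wmin)
    (Z : Fin d' → Ω → ℕ)
    (hZbinom : ∀ i, ∀ m : ℕ,
      μ {ω | Z i ω = m} =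
        ENNReal.ofReal ((k.choose m : ℝ) * w i ^ m * (1 - w i) ^ (k - m))) :
    1 - (d' : ℝ≥0∞) / (k : ℝ≥0∞) ^ q ≤
      μ {ω | (k : ℝ) * (wmin - Real.sqrt ((q : ℝ) * Real.log k / (2 * k))) * lam ≤
        lambdaMin ((1 : Matrix (Fin d') (Fin d') ℝ) +
          ∑ i, (Z i ω : ℝ) • Matrix.vecMulVec (x i) (x i))} := by
  have : Nonempty (Fin d') := ⟨⟨0, hd'⟩⟩
  have hk1 : (1 : ℝ) ≤ k := by exact_mod_cast (by omega : 1 ≤ k)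
  set ε := Real.sqrt ((q : ℝ) * Real.log k / (2 * k))
  set bad : Set Ω := ⋃ i, {ω | Z i ω < ⌈k * (w i - ε)⌉₊}
  have hbad : μ bad ≤ d' / (k : ℝ≥0∞) ^ q :=
    calc μ bad ≤ ∑ i, μ {ω | Z i ω < ⌈k * (w i - ε)⌉₊} := measure_iUnion_fintype_le _ _
      _ ≤ ∑ _i : Fin d', ENNReal.ofReal ((k : ℝ) ^ q)⁻¹ := sum_le_sum fun i _ =>
          exp_neg_two_mul_sqrt_sq hk1 q ▸
            measure_lt_ceil_le_of_binomial μ (hw i) (sqrt_nonneg _) (hZbinom i)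
      _ = d' / (k : ℝ≥0∞) ^ q := by
          rw [sum_const, card_univ, Fintype.card_fin, nsmul_eq_mul,
            ENNReal.ofReal_inv_of_pos (by positivity), ENNReal.ofReal_pow (by positivity),
            ENNReal.ofReal_natCast, div_eq_mul_inv]
  have hgood : 1 - μ bad ≤ μ badᶜ :=
    tsub_le_iff_left.mpr (measure_univ (μ := μ) ▸ measure_univ_le_add_compl bad)
  refine (tsub_le_tsub_left hbad 1).trans (hgood.trans (measure_mono fun ω hω => ?_))
  simp only [bad, Set.mem_compl_iff, Set.mem_iUnion, not_exists, Set.mem_ofPred_eq, not_lt] at hω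
  have hZ : ∀ i, k * (wmin - ε) ≤ Z i ω := fun i =>
    calc k * (wmin - ε) ≤ k * (w i - ε) := by gcongr; exact hwmin.2 ⟨i, rfl⟩
      _ ≤ ⌈k * (w i - ε)⌉₊ := Nat.le_ceil _
      _ ≤ Z i ω := by exact_mod_cast hω i
  rw [Set.mem_ofPred_eq, hlam]
  exact mul_lambdaMin_sum_vecMulVec_le x
    (mul_nonneg (Nat.cast_nonneg k) (sub_nonneg.mpr hcond)) hZ

/-- let `x_1, …, x_{d'} ∈ ℝ^{d'}` with `λ = λ_min(Σ_i x_i x_iᵀ) > 0`, let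
`Z_1, …, Z_{d'}` be independent with `Z_i ~ Binomial(k, w_i)`, `w_min = min_i w_i`, and
`ε_k = sqrt(q·log k/(2k))`. If `w_min ≥ ε_k`, then with probability at least `1 − d'/k^q`,
`λ_min(I + Σ_i Z_i·x_i x_iᵀ) ≥ k·(w_min − ε_k)·λ`. -/
theorem lambdaMin_covariance_lower_bound
    {Ω : Type*} [MeasurableSpace Ω] (μ : Measure Ω) [IsProbabilityMeasure μ]
    (d' : ℕ) (hd' : 0 < d') (k q : ℕ) (hk : 2 ≤ k) (hq : 1 ≤ q)
    (x : Fin d' → (Fin d' → ℝ)) (lam : ℝ)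
    (hlam : lam = lambdaMin (∑ i, Matrix.vecMulVec (x i) (x i)))
    (hlam_pos : 0 < lam)
    (w : Fin d' → ℝ) (hw : ∀ i, w i ∈ Set.Icc (0 : ℝ) 1)
    (wmin : ℝ) (hwmin : IsLeast (Set.range w) wmin)
    (hcond : Real.sqrt ((q : ℝ) * Real.log k / (2 * k)) ≤ wmin)
    (Z : Fin d' → Ω → ℕ) (hZmeas : ∀ i, Measurable (Z i))
    (hZindep : iIndepFun Z μ)
    (hZbinom : ∀ i, ∀ m : ℕ,
      μ {ω | Z i ω = m} =
        ENNReal.ofReal ((k.choose m : ℝ) * w i ^ m * (1 - w i) ^ (k - m))) :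
    1 - (d' : ℝ≥0∞) / (k : ℝ≥0∞) ^ q ≤
      μ {ω | (k : ℝ) * (wmin - Real.sqrt ((q : ℝ) * Real.log k / (2 * k))) * lam ≤
        lambdaMin ((1 : Matrix (Fin d') (Fin d') ℝ) +
          ∑ i, (Z i ω : ℝ) • Matrix.vecMulVec (x i) (x i))} :=
  lambdaMin_covariance_lower_bound_general μ d' hd' k q hk x lam hlam w hw wmin hwmin hcond Z
    hZbinom
end
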